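/- arXiv:1503.06924 — 7 statements merged into one kernel-verified Lean document; each statement's English description precedes it below -/
import Mathlib

section
/- For every integer l ≥ 4 that is not a multiple of 3, the graph G(l) satisfies λ(G(l)) = 6. -/
/-- An L(2,1)-labeling of a simple graph: adjacent vertices get labels differing by
at least 2, and vertices at distance exactly 2 get distinct labels. -/
def IsL21Labeling {V : Type*} (G : SimpleGraph V) (f : V → ℕ) : Prop :=
  (∀ a b : V, G.Adj a b → 2 ≤ ((f a : ℤ) - (f b : ℤ)).natAbs) ∧
  (∀ a b : V, G.dist a b = 2 → f a ≠ f b)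

/-- A k-L(2,1)-labeling: an L(2,1)-labeling with all labels in {0, 1, ..., k}. -/
def IsKL21Labeling {V : Type*} (G : SimpleGraph V) (k : ℕ) (f : V → ℕ) : Prop :=
  IsL21Labeling G f ∧ ∀ a : V, f a ≤ k

/-- The λ-number of a graph: the least k such that G admits a k-L(2,1)-labeling. -/
noncomputable def lambdaNumber {V : Type*} (G : SimpleGraph V) : ℕ :=
  sInf {k : ℕ | ∃ f : V → ℕ, IsKL21Labeling G k f}

/-- The vertices of the graph G(l): u, v, x_1, ..., x_l, y_1, ..., y_l.
Here `x i` for `i : Fin l` stands for the paper's x_{i+1} (0-indexed). -/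
inductive GLVert (l : ℕ) : Type where
  | u : GLVert l
  | v : GLVert l
  | x : Fin l → GLVert l
  | y : Fin l → GLVert l

/-- The edge relation of G(l) (up to symmetrization):
x_i x_{i+1}, y_i y_{i+1}, x_i y_i, u x_1, u y_1, v x_l, v y_l. -/
def GLRel (l : ℕ) : GLVert l → GLVert l → Prop
  | .x i, .x j => (i : ℕ) + 1 = (j : ℕ)
  | .y i, .y j => (i : ℕ) + 1 = (j : ℕ)
  | .x i, .y j => i = j
  | .u, .x i => (i : ℕ) = 0
  | .u, .y i => (i : ℕ) = 0
  | .x i, .v => (i : ℕ) = l - 1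
  | .y i, .v => (i : ℕ) = l - 1
  | _, _ => False

/-- The graph G(l) from the paper. -/
def GLGraph (l : ℕ) : SimpleGraph (GLVert l) := SimpleGraph.fromRel (GLRel l)

/-!
For `3 ∤ l` the labeling `x_i ↦ 4i mod 6`, `y_i ↦ 4i + 3 mod 6`, `u, v ↦ 6` is a
6-L(2,1)-labeling of `G(l)`.

Conversely, in a 5-L(2,1)-labeling the constraints between three consecutive rungs leave so
little room that, from the third rung on, consecutive rungs labelled `{0,3}` and `{2,5}`
("anchors") recur every three steps and nowhere in between; this is a finite check over the
labels `0, …, 5`. The graph is symmetric under `x_i ↔ x_{l-1-i}`, `y_i ↔ y_{l-1-i}`, `u ↔ v`,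
so there are anchors at rungs `2, 3` and at rungs `l - 4, l - 3`, whence `3 ∣ l`.
-/

open Finset

namespace SimpleGraph

variable {V : Type*} {G : SimpleGraph V} {a b c : V}

lemma dist_eq_two_iff :
    G.dist a b = 2 ↔ a ≠ b ∧ ¬ G.Adj a b ∧ (G.commonNeighbors a b).Nonempty := by
  rw [dist, ENat.toNat_eq_iff two_ne_zero]
  exact_mod_cast edist_eq_two_iff

lemma dist_eq_two_of_adj_of_adj (hac : G.Adj a c) (hcb : G.Adj c b) (hab : a ≠ b)
    (hnadj : ¬ G.Adj a b) : G.dist a b = 2 :=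
  dist_eq_two_iff.mpr ⟨hab, hnadj, c, hac, hcb.symm⟩

end SimpleGraph

lemma IsKL21Labeling.mono {V : Type*} {G : SimpleGraph V} {j k : ℕ} {f : V → ℕ}
    (hf : IsKL21Labeling G j f) (hjk : j ≤ k) : IsKL21Labeling G k f :=
  ⟨hf.1, fun a => (hf.2 a).trans hjk⟩

lemma lambdaNumber_eq_succ {V : Type*} {G : SimpleGraph V} {k : ℕ}
    (hex : ∃ f, IsKL21Labeling G (k + 1) f) (hnot : ∀ f, ¬ IsKL21Labeling G k f) :
    lambdaNumber G = k + 1 := by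
  refine le_antisymm (Nat.sInf_le hex) (le_csInf ⟨_, hex⟩ ?_)
  rintro j ⟨f, hf⟩
  by_contra! hj
  exact hnot f (hf.mono (Nat.le_of_lt_succ hj))

namespace Ladder

def Far (a b : ℕ) : Prop := a + 2 ≤ b ∨ b + 2 ≤ a

instance (a b : ℕ) : Decidable (Far a b) := inferInstanceAs (Decidable (_ ∨ _))

lemma far_iff_two_le_natAbs {a b : ℕ} : Far a b ↔ 2 ≤ ((a : ℤ) - b).natAbs := by
  unfold Far; omega

lemma Far.symm {a b : ℕ} (h : Far a b) : Far b a := Or.symm h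

def Step (p q : ℕ × ℕ) : Prop := Far p.1 q.1 ∧ Far p.2 q.2 ∧ p.1 ≠ q.2 ∧ p.2 ≠ q.1

instance (p q : ℕ × ℕ) : Decidable (Step p q) := inferInstanceAs (Decidable (_ ∧ _))

lemma Step.symm {p q : ℕ × ℕ} (h : Step p q) : Step q p :=
  ⟨h.1.symm, h.2.1.symm, h.2.2.2.symm, h.2.2.1.symm⟩

def Window (p q r : ℕ × ℕ) : Prop :=
  Far p.1 p.2 ∧ Far q.1 q.2 ∧ Far r.1 r.2 ∧ Step p q ∧ Step q r ∧ p.1 ≠ r.1 ∧ p.2 ≠ r.2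

instance (p q r : ℕ × ℕ) : Decidable (Window p q r) := inferInstanceAs (Decidable (_ ∧ _))

def Cap (m : ℕ) (p q : ℕ × ℕ) : Prop := Far m p.1 ∧ Far m p.2 ∧ m ≠ q.1 ∧ m ≠ q.2

instance (m : ℕ) (p q : ℕ × ℕ) : Decidable (Cap m p q) := inferInstanceAs (Decidable (_ ∧ _))

/-- From the third rung on, a 5-L(2,1)-labeling of the ladder repeats the rung labels
`{0,3}, {2,5}, {1,4}` up to the symmetries `t ↦ 5 - t` and `x ↔ y`; an anchor is a consecutive
pair of rungs labelled `{0,3}` and `{2,5}`. -/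
def IsAnchorRung (p : ℕ × ℕ) : Prop := p ∈ [(0, 3), (3, 0), (2, 5), (5, 2)]

instance (p : ℕ × ℕ) : Decidable (IsAnchorRung p) := inferInstanceAs (Decidable (_ ∈ _))

def IsAnchor (p q : ℕ × ℕ) : Prop := IsAnchorRung p ∧ IsAnchorRung q ∧ Step p q

instance (p q : ℕ × ℕ) : Decidable (IsAnchor p q) := inferInstanceAs (Decidable (_ ∧ _))

lemma IsAnchor.symm {p q : ℕ × ℕ} (h : IsAnchor p q) : IsAnchor q p :=
  ⟨h.2.1, h.1, h.2.2.symm⟩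

def labelPairs : Finset (ℕ × ℕ) := range 6 ×ˢ range 6

theorem isAnchor_of_cap : ∀ m < 6, ∀ p ∈ labelPairs, ∀ q ∈ labelPairs, Cap m p q →
    ∀ r ∈ labelPairs, Window p q r → ∀ s ∈ labelPairs, Window q r s → IsAnchor r s := by
  decide +kernel

theorem not_isAnchorRung_of_isAnchor : ∀ p ∈ labelPairs, ∀ q ∈ labelPairs, IsAnchor p q →
    ∀ r ∈ labelPairs, Window p q r → ¬ IsAnchorRung r := by
  decide +kernel

theorem isAnchor_of_isAnchor_of_windows : ∀ p ∈ labelPairs, ∀ q ∈ labelPairs, IsAnchor p q →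
    ∀ r ∈ labelPairs, Window p q r → ∀ s ∈ labelPairs, Window q r s →
    ∀ t ∈ labelPairs, Window r s t → IsAnchor s t := by
  decide +kernel

/-- The constraints that a 5-L(2,1)-labeling `f` of `G(n)` puts on the rungs
`r i = (f x_i, f y_i)` (for `i < n`) and on the caps `m = f u`, `w = f v`. -/
structure IsLabeling (n m w : ℕ) (r : ℕ → ℕ × ℕ) : Prop where
  cap_lt : m < 6 ∧ w < 6
  mem_labelPairs : ∀ i < n, r i ∈ labelPairs
  far_rung : ∀ i < n, Far (r i).1 (r i).2
  step : ∀ i, i + 1 < n → Step (r i) (r (i + 1))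
  skip : ∀ i, i + 2 < n → (r i).1 ≠ (r (i + 2)).1 ∧ (r i).2 ≠ (r (i + 2)).2
  cap_start : Cap m (r 0) (r 1)
  cap_end : Cap w (r (n - 1)) (r (n - 2))

namespace IsLabeling

variable {n m w : ℕ} {r : ℕ → ℕ × ℕ}

lemma window (h : IsLabeling n m w r) {i : ℕ} (hi : i + 2 < n) :
    Window (r i) (r (i + 1)) (r (i + 2)) :=
  ⟨h.far_rung i (by omega), h.far_rung (i + 1) (by omega), h.far_rung (i + 2) hi,
    h.step i (by omega), h.step (i + 1) hi, h.skip i hi⟩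

lemma reverse (h : IsLabeling n m w r) (hn : 2 ≤ n) :
    IsLabeling n w m (fun i => r (n - 1 - i)) where
  cap_lt := h.cap_lt.symm
  mem_labelPairs i _ := h.mem_labelPairs _ (by omega)
  far_rung i _ := h.far_rung _ (by omega)
  step i hi := by
    rw [show n - 1 - (i + 1) = n - 2 - i by omega, show n - 1 - i = n - 2 - i + 1 by omega]
    exact (h.step _ (by omega)).symm
  skip i hi := by
    rw [show n - 1 - (i + 2) = n - 3 - i by omega, show n - 1 - i = n - 3 - i + 2 by omega]
    exact ⟨(h.skip _ (by omega)).1.symm, (h.skip _ (by omega)).2.symm⟩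
  cap_start := by
    rw [Nat.sub_zero, show n - 1 - 1 = n - 2 by omega]
    exact h.cap_end
  cap_end := by
    rw [Nat.sub_self, show n - 1 - (n - 2) = 1 by omega]
    exact h.cap_start

lemma isAnchor_two (h : IsLabeling n m w r) (hn : 4 ≤ n) : IsAnchor (r 2) (r 3) :=
  isAnchor_of_cap m h.cap_lt.1 _ (h.mem_labelPairs 0 (by omega)) _ (h.mem_labelPairs 1 (by omega))
    h.cap_start _ (h.mem_labelPairs 2 (by omega)) (h.window (i := 0) (by omega))
    _ (h.mem_labelPairs 3 (by omega)) (h.window (i := 1) (by omega))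

lemma not_isAnchorRung (h : IsLabeling n m w r) {i : ℕ}
    (hA : IsAnchor (r i) (r (i + 1))) (hi : i + 2 < n) : ¬ IsAnchorRung (r (i + 2)) :=
  not_isAnchorRung_of_isAnchor _ (h.mem_labelPairs i (by omega)) _
    (h.mem_labelPairs (i + 1) (by omega)) hA _ (h.mem_labelPairs (i + 2) hi) (h.window hi)

lemma isAnchor_add_three (h : IsLabeling n m w r) {i : ℕ}
    (hA : IsAnchor (r i) (r (i + 1))) (hi : i + 4 < n) : IsAnchor (r (i + 3)) (r (i + 4)) :=
  isAnchor_of_isAnchor_of_windows _ (h.mem_labelPairs i (by omega)) _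
    (h.mem_labelPairs (i + 1) (by omega)) hA _ (h.mem_labelPairs (i + 2) (by omega))
    (h.window (i := i) (by omega)) _ (h.mem_labelPairs (i + 3) (by omega))
    (h.window (i := i + 1) (by omega)) _ (h.mem_labelPairs (i + 4) hi)
    (h.window (i := i + 2) (by omega))

lemma modEq_of_isAnchor (h : IsLabeling n m w r) {i j : ℕ}
    (hi : IsAnchor (r i) (r (i + 1))) (hj : IsAnchor (r j) (r (j + 1))) (hij : i ≤ j)
    (hjn : j + 1 < n) : i ≡ j [MOD 3] := by
  obtain ⟨k, rfl⟩ := Nat.exists_eq_add_of_le hij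
  clear hij
  induction k using Nat.strong_induction_on generalizing i with
  | _ k ih =>
    obtain rfl | rfl | rfl | hk : k = 0 ∨ k = 1 ∨ k = 2 ∨ 3 ≤ k := by omega
    · rfl
    · exact absurd hj.2.1 (h.not_isAnchorRung hi hjn)
    · exact absurd hj.1 (h.not_isAnchorRung hi (by omega))
    · have hi3 := h.isAnchor_add_three hi (by omega)
      rw [show i + k = i + 3 + (k - 3) by omega] at hj hjn ⊢
      exact (show i ≡ i + 3 [MOD 3] by simp [Nat.ModEq]).trans (ih (k - 3) (by omega) hi3 hj hjn)

theorem three_dvd (h : IsLabeling n m w r) (hn : 4 ≤ n) : 3 ∣ n := by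
  have hfront := h.isAnchor_two hn
  have hback : IsAnchor (r (n - 4)) (r (n - 4 + 1)) := by
    have := (h.reverse (by omega)).isAnchor_two hn
    rw [show n - 1 - 2 = n - 4 + 1 by omega, show n - 1 - 3 = n - 4 by omega] at this
    exact this.symm
  rcases le_total 2 (n - 4) with hle | hle
  · have := h.modEq_of_isAnchor hfront hback hle (by omega)
    rw [Nat.ModEq] at this; omega
  · have := h.modEq_of_isAnchor hback hfront hle (by omega)
    rw [Nat.ModEq] at this; omega

end IsLabeling

end Ladder

-- The caps get `6`, which the last rung allows only if it is not labelled `{2,5}`, i.e. if `3 ∤ l`.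
def periodicLabeling (l : ℕ) : GLVert l → ℕ
  | .u => 6
  | .v => 6
  | .x i => 4 * i % 6
  | .y i => (4 * i + 3) % 6

lemma isKL21Labeling_periodicLabeling {l : ℕ} (hl : 2 ≤ l) (h3 : ¬ 3 ∣ l) :
    IsKL21Labeling (GLGraph l) 6 (periodicLabeling l) := by
  refine ⟨⟨fun p q hpq => ?_, fun p q hpq => ?_⟩, fun p => ?_⟩
  · cases p <;> cases q <;> simp [GLGraph, GLRel, periodicLabeling, Fin.ext_iff] at hpq ⊢ <;> omega
  · obtain ⟨hne, -, c, hpc, hcq⟩ := SimpleGraph.dist_eq_two_iff.mp hpq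
    rw [SimpleGraph.mem_neighborSet] at hpc hcq
    cases p <;> cases c <;> cases q <;>
      simp [GLGraph, GLRel, periodicLabeling, Fin.ext_iff] at hne hpc hcq ⊢ <;> omega
  · cases p <;> simp [periodicLabeling] <;> omega

def rungLabels {l : ℕ} (f : GLVert l → ℕ) (i : ℕ) : ℕ × ℕ :=
  if h : i < l then (f (.x ⟨i, h⟩), f (.y ⟨i, h⟩)) else (0, 0)

lemma IsKL21Labeling.isLabeling_rungLabels {l : ℕ} {f : GLVert l → ℕ}
    (hf : IsKL21Labeling (GLGraph l) 5 f) (hl : 2 ≤ l) :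
    Ladder.IsLabeling l (f .u) (f .v) (rungLabels f) := by
  obtain ⟨⟨hadj, hdist⟩, hle⟩ := hf
  have far {p q : GLVert l} (h : (GLGraph l).Adj p q) : Ladder.Far (f p) (f q) :=
    Ladder.far_iff_two_le_natAbs.mpr (hadj p q h)
  have ne {p q : GLVert l} (c : GLVert l) (hpc : (GLGraph l).Adj p c)
      (hcq : (GLGraph l).Adj c q) (hpq : p ≠ q) (hn : ¬ (GLGraph l).Adj p q) : f p ≠ f q :=
    hdist p q (SimpleGraph.dist_eq_two_of_adj_of_adj hpc hcq hpq hn)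
  have hr (i : ℕ) (h : i < l) : rungLabels f i = (f (.x ⟨i, h⟩), f (.y ⟨i, h⟩)) := dif_pos h
  refine ⟨⟨by have := hle .u; omega, by have := hle .v; omega⟩, fun i hi => ?_, fun i hi => ?_,
    fun i hi => ?_, fun i hi => ?_, ?_, ?_⟩
  · rw [hr i hi, Ladder.labelPairs, mem_product, mem_range, mem_range]
    exact ⟨Nat.lt_succ_of_le (hle _), Nat.lt_succ_of_le (hle _)⟩
  · rw [hr i hi]
    exact far (by simp [GLGraph, GLRel])
  · rw [hr i (by omega), hr (i + 1) hi]
    refine ⟨far (by simp [GLGraph, GLRel]), far (by simp [GLGraph, GLRel]),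
      ne (.x ⟨i + 1, hi⟩) ?_ ?_ ?_ ?_, ne (.y ⟨i + 1, hi⟩) ?_ ?_ ?_ ?_⟩ <;>
      simp [GLGraph, GLRel]
  · rw [hr i (by omega), hr (i + 2) hi]
    refine ⟨ne (.x ⟨i + 1, by omega⟩) ?_ ?_ ?_ ?_, ne (.y ⟨i + 1, by omega⟩) ?_ ?_ ?_ ?_⟩ <;>
      simp [GLGraph, GLRel] <;> omega
  · rw [hr 0 (by omega), hr 1 (by omega)]
    refine ⟨far (by simp [GLGraph, GLRel]), far (by simp [GLGraph, GLRel]),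
      ne (.x ⟨0, by omega⟩) ?_ ?_ ?_ ?_, ne (.y ⟨0, by omega⟩) ?_ ?_ ?_ ?_⟩ <;>
      simp [GLGraph, GLRel]
  · rw [hr (l - 1) (by omega), hr (l - 2) (by omega)]
    refine ⟨far (by simp [GLGraph, GLRel]), far (by simp [GLGraph, GLRel]),
      ne (.x ⟨l - 1, by omega⟩) ?_ ?_ ?_ ?_, ne (.y ⟨l - 1, by omega⟩) ?_ ?_ ?_ ?_⟩ <;>
      simp [GLGraph, GLRel] <;> omega

theorem stmt0 (l : ℕ) (hl : 4 ≤ l) (h3 : ¬ 3 ∣ l) :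
    lambdaNumber (GLGraph l) = 6 :=
  lambdaNumber_eq_succ ⟨_, isKL21Labeling_periodicLabeling (by omega) h3⟩
    fun _ hf => h3 ((hf.isLabeling_rungLabels (by omega)).three_dvd hl)
end

section
/- For every integer l ≥ 4 that is not a multiple of 3, the graph G(l) satisfies λ(G(l)) ≥ 6; equivalently, G(l) admits no 5-L(2,1)-labeling. -/
namespace L21Aux

/-- labels differ by at least 2 -/
def dge2 (a b : ℕ) : Bool := decide (a + 2 ≤ b) || decide (b + 2 ≤ a)

/-- local constraints on two consecutive rungs (a,b) = (x_i,y_i), (c,d) = (x_{i+1},y_{i+1}) -/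
def okN (a b c d : ℕ) : Bool :=
  dge2 a b && dge2 c d && dge2 a c && dge2 b d && (c != b) && (d != a)

/-- a label for u compatible with first two rungs exists -/
def startOKN (a b c d : ℕ) : Bool :=
  (List.range 6).any fun w => dge2 w a && dge2 w b && (w != c) && (w != d)

/-- a label for v compatible with last two rungs exists -/
def endOKN (a b c d : ℕ) : Bool :=
  (List.range 6).any fun w => dge2 w c && dge2 w d && (w != a) && (w != b)

def startL : List (Nat × Nat × Nat × Nat) := [(0,2,3,5), (0,3,4,1), (0,4,3,1), (0,4,5,1), (0,5,3,1), (0,5,4,1), (0,5,4,2), (1,3,4,0), (1,5,4,0), (1,5,4,2), (2,0,5,3), (2,4,5,1), (2,5,4,1), (3,0,1,4), (3,1,0,4), (3,5,0,2), (4,0,1,3), (4,0,1,5), (4,2,1,5), (5,0,1,3), (5,0,1,4), (5,0,2,4), (5,1,0,4), (5,1,2,4), (5,2,1,4), (5,3,2,0)]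

def AL : List (Nat × Nat × Nat × Nat × Nat) := [(0,3,2,5,2), (0,3,4,1,0), (0,3,5,1,0), (0,4,3,1,1), (0,4,5,2,1), (1,4,3,0,1), (1,4,5,2,1), (1,5,3,0,1), (1,5,4,2,1), (2,5,0,3,2), (2,5,4,0,0), (2,5,4,1,0), (3,0,1,4,0), (3,0,1,5,0), (3,0,5,2,2), (4,0,1,3,1), (4,0,2,5,1), (4,1,0,3,1), (4,1,2,5,1), (5,1,0,3,1), (5,1,2,4,1), (5,2,0,4,0), (5,2,1,4,0), (5,2,3,0,2)]

def memA (a b c d r : ℕ) : Bool := decide ((a,b,c,d,r) ∈ AL)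

def stepOK (a b c d e g : ℕ) : Bool := okN c d e g && (e != a) && (g != b)

def range6 : List ℕ := List.range 6

def chkStartMem : Bool := range6.all fun a => range6.all fun b => range6.all fun c =>
  range6.all fun d => !(okN a b c d && startOKN a b c d) || decide ((a,b,c,d) ∈ startL)

def chkStart : Bool := startL.all fun s => range6.all fun e => range6.all fun g =>
  !(stepOK s.1 s.2.1 s.2.2.1 s.2.2.2 e g) || memA s.2.2.1 s.2.2.2 e g 1

def chkStep : Bool := AL.all fun s => range6.all fun e => range6.all fun g =>
  !(stepOK s.1 s.2.1 s.2.2.1 s.2.2.2.1 e g) ||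
    memA s.2.2.1 s.2.2.2.1 e g ((s.2.2.2.2 + 1) % 3)

def chkEnd : Bool := AL.all fun s =>
  !(endOKN s.1 s.2.1 s.2.2.1 s.2.2.2.1) || (s.2.2.2.2 == 1)

lemma chkStartMem_true : chkStartMem = true := by decide
lemma chkStart_true : chkStart = true := by decide
lemma chkStep_true : chkStep = true := by decide
lemma chkEnd_true : chkEnd = true := by decide

lemma mem_range6 {a : ℕ} (h : a < 6) : a ∈ range6 := List.mem_range.mpr h

/-- start states are in startL -/
lemma startL_mem {a b c d : ℕ} (ha : a < 6) (hb : b < 6) (hc : c < 6) (hd : d < 6)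
    (h1 : okN a b c d = true) (h2 : startOKN a b c d = true) :
    (a, b, c, d) ∈ startL := by
  have H := chkStartMem_true
  rw [chkStartMem, List.all_eq_true] at H
  have H := H a (mem_range6 ha)
  rw [List.all_eq_true] at H
  have H := H b (mem_range6 hb)
  rw [List.all_eq_true] at H
  have H := H c (mem_range6 hc)
  rw [List.all_eq_true] at H
  have H := H d (mem_range6 hd)
  rw [h1, h2] at H
  simpa using H

lemma start_step {a b c d e g : ℕ} (he : e < 6) (hg : g < 6)
    (hmem : (a, b, c, d) ∈ startL) (h : stepOK a b c d e g = true) :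
    memA c d e g 1 = true := by
  have H := chkStart_true
  rw [chkStart, List.all_eq_true] at H
  have H := H _ hmem
  rw [List.all_eq_true] at H
  have H := H e (mem_range6 he)
  rw [List.all_eq_true] at H
  have H := H g (mem_range6 hg)
  rw [h] at H
  simpa using H

lemma step_step {a b c d e g r : ℕ} (he : e < 6) (hg : g < 6)
    (hmem : memA a b c d r = true) (h : stepOK a b c d e g = true) :
    memA c d e g ((r + 1) % 3) = true := by
  rw [memA, decide_eq_true_iff] at hmem
  have H := chkStep_true
  rw [chkStep, List.all_eq_true] at H
  have H := H _ hmem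
  rw [List.all_eq_true] at H
  have H := H e (mem_range6 he)
  rw [List.all_eq_true] at H
  have H := H g (mem_range6 hg)
  rw [h] at H
  simpa using H

lemma end_step {a b c d r : ℕ} (hmem : memA a b c d r = true)
    (h : endOKN a b c d = true) : r = 1 := by
  rw [memA, decide_eq_true_iff] at hmem
  have H := chkEnd_true
  rw [chkEnd, List.all_eq_true] at H
  have H := H _ hmem
  rw [h] at H
  simpa using H

lemma startOKN_intro {a b c d w : ℕ} (hw : w < 6) (h1 : dge2 w a = true)
    (h2 : dge2 w b = true) (h3 : w ≠ c) (h4 : w ≠ d) : startOKN a b c d = true := by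
  rw [startOKN, List.any_eq_true]
  exact ⟨w, List.mem_range.mpr hw, by rw [h1, h2]; simp [h3, h4]⟩

lemma endOKN_intro {a b c d w : ℕ} (hw : w < 6) (h1 : dge2 w c = true)
    (h2 : dge2 w d = true) (h3 : w ≠ a) (h4 : w ≠ b) : endOKN a b c d = true := by
  rw [endOKN, List.any_eq_true]
  exact ⟨w, List.mem_range.mpr hw, by rw [h1, h2]; simp [h3, h4]⟩

lemma dge2_comm {a b : ℕ} (h : dge2 a b = true) : dge2 b a = true := by
  simp [dge2] at *; omega

lemma okN_intro {a b c d : ℕ} (h1 : dge2 a b = true) (h2 : dge2 c d = true)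
    (h3 : dge2 a c = true) (h4 : dge2 b d = true) (h5 : c ≠ b) (h6 : d ≠ a) :
    okN a b c d = true := by
  rw [okN, h1, h2, h3, h4]; simp [h5, h6]

lemma stepOK_intro {a b c d e g : ℕ} (h1 : okN c d e g = true) (h2 : e ≠ a)
    (h3 : g ≠ b) : stepOK a b c d e g = true := by
  rw [stepOK, h1]; simp [h2, h3]

end L21Aux

theorem stmt2 (l : ℕ) (hl : 4 ≤ l) (h3 : ¬ 3 ∣ l) :
    6 ≤ lambdaNumber (GLGraph l) ∧
    ¬ ∃ f : GLVert l → ℕ, IsKL21Labeling (GLGraph l) 5 f := by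
  open L21Aux in
  have key : ¬ ∃ f : GLVert l → ℕ, IsKL21Labeling (GLGraph l) 5 f := by
    rintro ⟨f, ⟨⟨hadj, hdist⟩, hbd⟩⟩
    -- adjacency introduction
    have adjI : ∀ a b : GLVert l, a ≠ b → GLRel l a b → (GLGraph l).Adj a b :=
      fun a b h1 h2 => (SimpleGraph.fromRel_adj _ _ _).mpr ⟨h1, Or.inl h2⟩
    have nadjI : ∀ a b : GLVert l, ¬ GLRel l a b → ¬ GLRel l b a →
        ¬ (GLGraph l).Adj a b := by
      intro a b h1 h2 hA
      rcases (SimpleGraph.fromRel_adj _ _ _).mp hA with ⟨_, h | h⟩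
      · exact h1 h
      · exact h2 h
    -- adjacent labels differ by ≥ 2
    have adj2 : ∀ a b : GLVert l, (GLGraph l).Adj a b → dge2 (f a) (f b) = true := by
      intro a b h
      have := hadj a b h
      simp only [dge2, Bool.or_eq_true, decide_eq_true_iff]
      omega
    -- distance-two labels differ
    have ne2 : ∀ a b c : GLVert l, (GLGraph l).Adj a b → (GLGraph l).Adj b c →
        a ≠ c → ¬ (GLGraph l).Adj a c → f a ≠ f c := by
      intro a b c h1 h2 hne hna
      apply hdist
      have hle : (GLGraph l).dist a c ≤ 2 := by
        simpa using SimpleGraph.dist_le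
          (SimpleGraph.Walk.cons h1 (SimpleGraph.Walk.cons h2 SimpleGraph.Walk.nil))
      have hpos := SimpleGraph.Reachable.pos_dist_of_ne
        ⟨SimpleGraph.Walk.cons h1 (SimpleGraph.Walk.cons h2 SimpleGraph.Walk.nil)⟩ hne
      have h1' : (GLGraph l).dist a c ≠ 1 := fun h =>
        hna (SimpleGraph.dist_eq_one_iff_adj.mp h)
      omega
    -- specific adjacencies
    have axy : ∀ i : Fin l, (GLGraph l).Adj (.x i) (.y i) := by
      intro i
      exact adjI _ _ (by simp) (by show i = i; rfl)
    have axx : ∀ i j : Fin l, (i : ℕ) + 1 = (j : ℕ) → (GLGraph l).Adj (.x i) (.x j) := by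
      intro i j h
      exact adjI _ _ (by first | (simp [Fin.ext_iff]; omega) | simp [Fin.ext_iff] | omega) (by exact h)
    have ayy : ∀ i j : Fin l, (i : ℕ) + 1 = (j : ℕ) → (GLGraph l).Adj (.y i) (.y j) := by
      intro i j h
      exact adjI _ _ (by first | (simp [Fin.ext_iff]; omega) | simp [Fin.ext_iff] | omega) (by exact h)
    have aux : ∀ i : Fin l, (i : ℕ) = 0 → (GLGraph l).Adj .u (.x i) :=
      fun i h => adjI _ _ (by simp) (by exact h)
    have auy : ∀ i : Fin l, (i : ℕ) = 0 → (GLGraph l).Adj .u (.y i) :=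
      fun i h => adjI _ _ (by simp) (by exact h)
    have axv : ∀ i : Fin l, (i : ℕ) = l - 1 → (GLGraph l).Adj (.x i) .v :=
      fun i h => adjI _ _ (by simp) (by exact h)
    have ayv : ∀ i : Fin l, (i : ℕ) = l - 1 → (GLGraph l).Adj (.y i) .v :=
      fun i h => adjI _ _ (by simp) (by exact h)
    -- specific non-adjacencies
    have nxy : ∀ i j : Fin l, (i : ℕ) ≠ (j : ℕ) → ¬ (GLGraph l).Adj (.x i) (.y j) := by
      intro i j h
      exact nadjI _ _ (by simp [GLRel, Fin.ext_iff]; omega) (by simp [GLRel])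
    have nxx : ∀ i j : Fin l, (i : ℕ) + 1 ≠ (j : ℕ) → (j : ℕ) + 1 ≠ (i : ℕ) →
        ¬ (GLGraph l).Adj (.x i) (.x j) := by
      intro i j h1 h2
      exact nadjI _ _ (by simpa [GLRel] using h1) (by simpa [GLRel] using h2)
    have nyy : ∀ i j : Fin l, (i : ℕ) + 1 ≠ (j : ℕ) → (j : ℕ) + 1 ≠ (i : ℕ) →
        ¬ (GLGraph l).Adj (.y i) (.y j) := by
      intro i j h1 h2
      exact nadjI _ _ (by simpa [GLRel] using h1) (by simpa [GLRel] using h2)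
    have nux : ∀ i : Fin l, (i : ℕ) ≠ 0 → ¬ (GLGraph l).Adj .u (.x i) := by
      intro i h
      exact nadjI _ _ (by simpa [GLRel] using h) (by simp [GLRel])
    have nuy : ∀ i : Fin l, (i : ℕ) ≠ 0 → ¬ (GLGraph l).Adj .u (.y i) := by
      intro i h
      exact nadjI _ _ (by simpa [GLRel] using h) (by simp [GLRel])
    have nxv : ∀ i : Fin l, (i : ℕ) ≠ l - 1 → ¬ (GLGraph l).Adj (.x i) .v := by
      intro i h
      exact nadjI _ _ (by simpa [GLRel] using h) (by simp [GLRel])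
    have nyv : ∀ i : Fin l, (i : ℕ) ≠ l - 1 → ¬ (GLGraph l).Adj (.y i) .v := by
      intro i h
      exact nadjI _ _ (by simpa [GLRel] using h) (by simp [GLRel])
    -- label sequences
    set X : ℕ → ℕ := fun i => if h : i < l then f (GLVert.x ⟨i, h⟩) else 0 with hXdef
    set Y : ℕ → ℕ := fun i => if h : i < l then f (GLVert.y ⟨i, h⟩) else 0 with hYdef
    have hXv : ∀ i (h : i < l), X i = f (GLVert.x ⟨i, h⟩) := fun i h => dif_pos h
    have hYv : ∀ i (h : i < l), Y i = f (GLVert.y ⟨i, h⟩) := fun i h => dif_pos h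
    have hX6 : ∀ i, X i < 6 := by
      intro i
      simp only [hXdef]
      split
      · exact Nat.lt_succ_of_le (hbd _)
      · omega
    have hY6 : ∀ i, Y i < 6 := by
      intro i
      simp only [hYdef]
      split
      · exact Nat.lt_succ_of_le (hbd _)
      · omega
    -- numeric facts
    have F1 : ∀ i (h : i < l), dge2 (X i) (Y i) = true := by
      intro i h
      rw [hXv i h, hYv i h]
      exact adj2 _ _ (axy ⟨i, h⟩)
    have F2x : ∀ i (h : i + 1 < l), dge2 (X i) (X (i + 1)) = true := by
      intro i h
      rw [hXv i (by omega), hXv (i + 1) h]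
      exact adj2 _ _ (axx ⟨i, by omega⟩ ⟨i + 1, h⟩ rfl)
    have F2y : ∀ i (h : i + 1 < l), dge2 (Y i) (Y (i + 1)) = true := by
      intro i h
      rw [hYv i (by omega), hYv (i + 1) h]
      exact adj2 _ _ (ayy ⟨i, by omega⟩ ⟨i + 1, h⟩ rfl)
    have F3x : ∀ i (h : i + 1 < l), X (i + 1) ≠ Y i := by
      intro i h
      rw [hXv (i + 1) h, hYv i (by omega)]
      exact ne2 (.x ⟨i + 1, h⟩) (.x ⟨i, by omega⟩) (.y ⟨i, by omega⟩)
        ((axx ⟨i, by omega⟩ ⟨i + 1, h⟩ rfl).symm) (axy ⟨i, by omega⟩)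
        (by simp) (nxy ⟨i + 1, h⟩ ⟨i, by omega⟩ (by simp))
    have F3y : ∀ i (h : i + 1 < l), Y (i + 1) ≠ X i := by
      intro i h
      rw [hYv (i + 1) h, hXv i (by omega)]
      exact ne2 (.y ⟨i + 1, h⟩) (.y ⟨i, by omega⟩) (.x ⟨i, by omega⟩)
        ((ayy ⟨i, by omega⟩ ⟨i + 1, h⟩ rfl).symm) (axy ⟨i, by omega⟩).symm
        (by simp) (fun hA => (nxy ⟨i, by omega⟩ ⟨i + 1, h⟩ (by simp)) hA.symm)
    have F4x : ∀ i (h : i + 2 < l), X (i + 2) ≠ X i := by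
      intro i h
      rw [hXv (i + 2) h, hXv i (by omega)]
      exact ne2 (.x ⟨i + 2, h⟩) (.x ⟨i + 1, by omega⟩) (.x ⟨i, by omega⟩)
        ((axx ⟨i + 1, by omega⟩ ⟨i + 2, h⟩ rfl).symm)
        ((axx ⟨i, by omega⟩ ⟨i + 1, by omega⟩ rfl).symm)
        (by first | (simp [Fin.ext_iff]; omega) | simp [Fin.ext_iff] | omega)
        (nxx ⟨i + 2, h⟩ ⟨i, by omega⟩ (by first | (simp; omega) | simp | omega) (by first | (simp; omega) | simp | omega))
    have F4y : ∀ i (h : i + 2 < l), Y (i + 2) ≠ Y i := by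
      intro i h
      rw [hYv (i + 2) h, hYv i (by omega)]
      exact ne2 (.y ⟨i + 2, h⟩) (.y ⟨i + 1, by omega⟩) (.y ⟨i, by omega⟩)
        ((ayy ⟨i + 1, by omega⟩ ⟨i + 2, h⟩ rfl).symm)
        ((ayy ⟨i, by omega⟩ ⟨i + 1, by omega⟩ rfl).symm)
        (by first | (simp [Fin.ext_iff]; omega) | simp [Fin.ext_iff] | omega)
        (nyy ⟨i + 2, h⟩ ⟨i, by omega⟩ (by first | (simp; omega) | simp | omega) (by first | (simp; omega) | simp | omega))
    have hokN : ∀ i (h : i + 1 < l), okN (X i) (Y i) (X (i + 1)) (Y (i + 1)) = true := by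
      intro i h
      exact okN_intro (F1 i (by omega)) (F1 (i + 1) h) (F2x i h) (F2y i h)
        (F3x i h) (F3y i h)
    -- start fact
    have hstart : startOKN (X 0) (Y 0) (X 1) (Y 1) = true := by
      refine startOKN_intro (w := f GLVert.u) (Nat.lt_succ_of_le (hbd _)) ?_ ?_ ?_ ?_
      · rw [hXv 0 (by omega)]
        exact adj2 _ _ (aux ⟨0, by omega⟩ rfl)
      · rw [hYv 0 (by omega)]
        exact adj2 _ _ (auy ⟨0, by omega⟩ rfl)
      · rw [hXv 1 (by omega)]
        exact ne2 .u (.x ⟨0, by omega⟩) (.x ⟨1, by omega⟩)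
          (aux ⟨0, by omega⟩ rfl) (axx ⟨0, by omega⟩ ⟨1, by omega⟩ rfl)
          (by simp) (nux ⟨1, by omega⟩ (by simp))
      · rw [hYv 1 (by omega)]
        exact ne2 .u (.y ⟨0, by omega⟩) (.y ⟨1, by omega⟩)
          (auy ⟨0, by omega⟩ rfl) (ayy ⟨0, by omega⟩ ⟨1, by omega⟩ rfl)
          (by simp) (nuy ⟨1, by omega⟩ (by simp))
    -- end fact
    have hend : endOKN (X (l - 2)) (Y (l - 2)) (X (l - 1)) (Y (l - 1)) = true := by
      refine endOKN_intro (w := f GLVert.v) (Nat.lt_succ_of_le (hbd _)) ?_ ?_ ?_ ?_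
      · rw [hXv (l - 1) (by omega)]
        exact dge2_comm (adj2 _ _ (axv ⟨l - 1, by omega⟩ rfl))
      · rw [hYv (l - 1) (by omega)]
        exact dge2_comm (adj2 _ _ (ayv ⟨l - 1, by omega⟩ rfl))
      · rw [hXv (l - 2) (by omega)]
        exact ne2 .v (.x ⟨l - 1, by omega⟩) (.x ⟨l - 2, by omega⟩)
          (axv ⟨l - 1, by omega⟩ rfl).symm
          ((axx ⟨l - 2, by omega⟩ ⟨l - 1, by omega⟩ (by show l - 2 + 1 = l - 1; omega)).symm)
          (by simp)
          (fun hA => (nxv ⟨l - 2, by omega⟩ (by show l - 2 ≠ l - 1; omega)) hA.symm)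
      · rw [hYv (l - 2) (by omega)]
        exact ne2 .v (.y ⟨l - 1, by omega⟩) (.y ⟨l - 2, by omega⟩)
          (ayv ⟨l - 1, by omega⟩ rfl).symm
          ((ayy ⟨l - 2, by omega⟩ ⟨l - 1, by omega⟩ (by show l - 2 + 1 = l - 1; omega)).symm)
          (by simp)
          (fun hA => (nyv ⟨l - 2, by omega⟩ (by show l - 2 ≠ l - 1; omega)) hA.symm)
    -- the induction
    have main : ∀ i, 1 ≤ i → i + 2 ≤ l →
        memA (X i) (Y i) (X (i + 1)) (Y (i + 1)) (i % 3) = true := by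
      intro i hi
      induction i, hi using Nat.le_induction with
      | base =>
        intro _
        have hmem := startL_mem (hX6 0) (hY6 0) (hX6 1) (hY6 1)
          (hokN 0 (by omega)) hstart
        exact start_step (hX6 2) (hY6 2) hmem
          (stepOK_intro (hokN 1 (by omega)) (F4x 0 (by omega)) (F4y 0 (by omega)))
      | succ i hi ih =>
        intro h
        have hA := ih (by omega)
        have h2 := step_step (hX6 (i + 2)) (hY6 (i + 2)) hA
          (stepOK_intro (hokN (i + 1) (by omega)) (F4x i (by omega)) (F4y i (by omega)))
        have : (i % 3 + 1) % 3 = (i + 1) % 3 := by omega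
        rwa [this] at h2
    have hm := main (l - 2) (by omega) (by omega)
    have e1 : l - 2 + 1 = l - 1 := by omega
    rw [e1] at hm
    have := end_step hm hend
    omega
  refine ⟨?_, key⟩
  -- lambda number ≥ 6
  have hne : {k : ℕ | ∃ f : GLVert l → ℕ, IsKL21Labeling (GLGraph l) k f}.Nonempty := by
    classical
    refine ⟨2 * (2 * l + 1), ?_⟩
    let g : GLVert l → ℕ := fun w => match w with
      | .u => 0
      | .v => 1
      | .x i => 2 + (i : ℕ)
      | .y i => 2 + l + (i : ℕ)
    have ginj : Function.Injective g := by
      intro a b hab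
      cases a <;> cases b <;> simp only [g] at hab <;>
        first
        | rfl
        | (congr 1; exact Fin.ext (by omega))
        | (exfalso; rename_i i j; have := i.is_lt; have := j.is_lt; omega)
        | (exfalso; rename_i i; have := i.is_lt; omega)
        | (exfalso; omega)
    refine ⟨fun w => 2 * g w, ⟨⟨?_, ?_⟩, ?_⟩⟩
    · intro a b hab
      have : g a ≠ g b := fun h => hab.ne (ginj h)
      show 2 ≤ (((2 * g a : ℕ) : ℤ) - ((2 * g b : ℕ) : ℤ)).natAbs
      omega
    · intro a b hd
      have hne : a ≠ b := by
        rintro rfl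
        rw [SimpleGraph.dist_self] at hd
        omega
      intro h
      have h' : 2 * g a = 2 * g b := h
      exact hne (ginj (by omega))
    · intro a
      have : g a ≤ 2 * l + 1 := by
        cases a <;> simp only [g] <;> first | omega | (have := Fin.is_lt ‹Fin l›; omega)
      show 2 * g a ≤ 2 * (2 * l + 1)
      omega
  have hmem := Nat.sInf_mem hne
  by_contra hcon
  push_neg at hcon
  obtain ⟨f, hf⟩ := hmem
  unfold lambdaNumber at hcon
  exact key ⟨f, hf.1, fun a => le_trans (hf.2 a) (by omega)⟩
end

section
/- Let l ≥ 3 and let f be a 5-L(2,1)-labeling of G(l). Then every connected component of H_1 and every connected component of H_2 has at least two vertices. -/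
/-- Vertices labelled with an even label 0, 2 or 4 (vertex set of H_1). -/
def H1Set (l : ℕ) (f : GLVert l → ℕ) : Set (GLVert l) :=
  {w | f w = 0 ∨ f w = 2 ∨ f w = 4}

/-- Vertices labelled with an odd label 1, 3 or 5 (vertex set of H_2). -/
def H2Set (l : ℕ) (f : GLVert l → ℕ) : Set (GLVert l) :=
  {w | f w = 1 ∨ f w = 3 ∨ f w = 5}

/-- `T` is the vertex set of a connected component of the subgraph of `G` induced by `S`. -/
def IsCompOf {V : Type*} (G : SimpleGraph V) (S T : Set V) : Prop :=
  ∃ c : (G.induce S).ConnectedComponent,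
    T = Subtype.val '' {w : S | (G.induce S).connectedComponentMk w = c}

section Helpers
open SimpleGraph

lemma dist_eq_two_of {V : Type*} {G : SimpleGraph V} {a b c : V} (hab : G.Adj a b)
    (hbc : G.Adj b c) (hne : a ≠ c) (hnadj : ¬ G.Adj a c) : G.dist a c = 2 := by
  have hle : G.dist a c ≤ 2 := by
    simpa using SimpleGraph.dist_le (Walk.cons hab (Walk.cons hbc Walk.nil))
  have h0 : G.dist a c ≠ 0 := by
    rw [ne_eq, SimpleGraph.dist_eq_zero_iff_eq_or_not_reachable]
    push_neg
    exact ⟨hne, ⟨Walk.cons hab (Walk.cons hbc Walk.nil)⟩⟩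
  have h1 : G.dist a c ≠ 1 := fun h => hnadj (SimpleGraph.dist_eq_one_iff_adj.mp h)
  omega

variable {l : ℕ}

lemma glAdj_iff (a b : GLVert l) :
    (GLGraph l).Adj a b ↔ a ≠ b ∧ (GLRel l a b ∨ GLRel l b a) :=
  SimpleGraph.fromRel_adj _ a b

lemma x_ne_x {i j : Fin l} (h : (i : ℕ) ≠ (j : ℕ)) : (GLVert.x i) ≠ GLVert.x j := by
  intro he; injection he with h'; exact h (congrArg Fin.val h')

lemma y_ne_y {i j : Fin l} (h : (i : ℕ) ≠ (j : ℕ)) : (GLVert.y i) ≠ GLVert.y j := by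
  intro he; injection he with h'; exact h (congrArg Fin.val h')

lemma adj_xy (i : Fin l) : (GLGraph l).Adj (.x i) (.y i) :=
  (glAdj_iff _ _).mpr ⟨by nofun, Or.inl rfl⟩

lemma adj_xx {i j : Fin l} (h : (i : ℕ) + 1 = (j : ℕ)) : (GLGraph l).Adj (.x i) (.x j) :=
  (glAdj_iff _ _).mpr ⟨x_ne_x (by omega), Or.inl h⟩

lemma adj_yy {i j : Fin l} (h : (i : ℕ) + 1 = (j : ℕ)) : (GLGraph l).Adj (.y i) (.y j) :=
  (glAdj_iff _ _).mpr ⟨y_ne_y (by omega), Or.inl h⟩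

lemma adj_ux {i : Fin l} (h : (i : ℕ) = 0) : (GLGraph l).Adj .u (.x i) :=
  (glAdj_iff _ _).mpr ⟨by nofun, Or.inl h⟩

lemma adj_uy {i : Fin l} (h : (i : ℕ) = 0) : (GLGraph l).Adj .u (.y i) :=
  (glAdj_iff _ _).mpr ⟨by nofun, Or.inl h⟩

lemma adj_xv {i : Fin l} (h : (i : ℕ) = l - 1) : (GLGraph l).Adj (.x i) .v :=
  (glAdj_iff _ _).mpr ⟨by nofun, Or.inl h⟩

lemma adj_yv {i : Fin l} (h : (i : ℕ) = l - 1) : (GLGraph l).Adj (.y i) .v :=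
  (glAdj_iff _ _).mpr ⟨by nofun, Or.inl h⟩

lemma not_adj_xx {i j : Fin l} (h1 : (i : ℕ) + 1 ≠ (j : ℕ)) (h2 : (j : ℕ) + 1 ≠ (i : ℕ)) :
    ¬ (GLGraph l).Adj (.x i) (.x j) := by
  rw [glAdj_iff]; rintro ⟨-, h | h⟩
  · exact h1 h
  · exact h2 h

lemma not_adj_yy {i j : Fin l} (h1 : (i : ℕ) + 1 ≠ (j : ℕ)) (h2 : (j : ℕ) + 1 ≠ (i : ℕ)) :
    ¬ (GLGraph l).Adj (.y i) (.y j) := by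
  rw [glAdj_iff]; rintro ⟨-, h | h⟩
  · exact h1 h
  · exact h2 h

lemma not_adj_xy {i j : Fin l} (h : i ≠ j) : ¬ (GLGraph l).Adj (.x i) (.y j) := by
  rw [glAdj_iff]; rintro ⟨-, h' | h'⟩
  · exact h h'
  · exact h'

lemma not_adj_ux {i : Fin l} (h : (i : ℕ) ≠ 0) : ¬ (GLGraph l).Adj .u (.x i) := by
  rw [glAdj_iff]; rintro ⟨-, h' | h'⟩
  · exact h h'
  · exact h'

lemma not_adj_uy {i : Fin l} (h : (i : ℕ) ≠ 0) : ¬ (GLGraph l).Adj .u (.y i) := by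
  rw [glAdj_iff]; rintro ⟨-, h' | h'⟩
  · exact h h'
  · exact h'

lemma not_adj_xv {i : Fin l} (h : (i : ℕ) ≠ l - 1) : ¬ (GLGraph l).Adj (.x i) .v := by
  rw [glAdj_iff]; rintro ⟨-, h' | h'⟩
  · exact h h'
  · exact h'

lemma not_adj_yv {i : Fin l} (h : (i : ℕ) ≠ l - 1) : ¬ (GLGraph l).Adj (.y i) .v := by
  rw [glAdj_iff]; rintro ⟨-, h' | h'⟩
  · exact h h'
  · exact h'

set_option maxHeartbeats 1000000 in
/-- Every vertex of G(l) has a neighbor with a label of the same parity. -/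
lemma exists_parity_neighbor (l : ℕ) (hl : 3 ≤ l) (f : GLVert l → ℕ)
    (hf : IsKL21Labeling (GLGraph l) 5 f) (w : GLVert l) :
    ∃ w', (GLGraph l).Adj w w' ∧ f w' % 2 = f w % 2 := by
  have hD : ∀ a b : GLVert l, (GLGraph l).Adj a b → f a + 2 ≤ f b ∨ f b + 2 ≤ f a := by
    intro a b h; have := hf.1.1 a b h; omega
  have hN : ∀ a b : GLVert l, (GLGraph l).dist a b = 2 → f a ≠ f b := hf.1.2
  have hB : ∀ a : GLVert l, f a ≤ 5 := hf.2
  by_contra hcon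
  push_neg at hcon
  cases w with
  | u =>
    obtain ⟨i0, hi0⟩ : ∃ i : Fin l, (i : ℕ) = 0 := ⟨⟨0, by omega⟩, rfl⟩
    obtain ⟨i1, hi1⟩ : ∃ i : Fin l, (i : ℕ) = 1 := ⟨⟨1, by omega⟩, rfl⟩
    have a1 : (GLGraph l).Adj .u (.x i0) := adj_ux hi0
    have a2 : (GLGraph l).Adj .u (.y i0) := adj_uy hi0
    have a3 : (GLGraph l).Adj (.x i0) (.y i0) := adj_xy i0
    have a4 : (GLGraph l).Adj (.x i0) (.x i1) := adj_xx (by omega)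
    have a5 : (GLGraph l).Adj (.y i0) (.y i1) := adj_yy (by omega)
    have a6 : (GLGraph l).Adj (.x i1) (.y i1) := adj_xy i1
    have d1 : (GLGraph l).dist .u (.x i1) = 2 :=
      dist_eq_two_of a1 a4 (by nofun) (not_adj_ux (by omega))
    have d2 : (GLGraph l).dist .u (.y i1) = 2 :=
      dist_eq_two_of a2 a5 (by nofun) (not_adj_uy (by omega))
    have d3 : (GLGraph l).dist (.x i0) (.y i1) = 2 :=
      dist_eq_two_of a3 a5 (by nofun) (not_adj_xy (Fin.ne_of_val_ne (by omega)))
    have d4 : (GLGraph l).dist (.y i0) (.x i1) = 2 :=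
      dist_eq_two_of a3.symm a4 (by nofun)
        (fun h => not_adj_xy (Fin.ne_of_val_ne (by omega)) h.symm)
    have p1 := hcon _ a1; have p2 := hcon _ a2
    have e1 := hD _ _ a1; have e2 := hD _ _ a2; have e3 := hD _ _ a3
    have e4 := hD _ _ a4; have e5 := hD _ _ a5; have e6 := hD _ _ a6
    have n1 := hN _ _ d1; have n2 := hN _ _ d2; have n3 := hN _ _ d3; have n4 := hN _ _ d4
    have b0 := hB (.u); have b1 := hB (.x i0); have b2 := hB (.y i0)
    have b3 := hB (.x i1); have b4 := hB (.y i1)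
    omega
  | v =>
    obtain ⟨i0, hi0⟩ : ∃ i : Fin l, (i : ℕ) = l - 1 := ⟨⟨l - 1, by omega⟩, rfl⟩
    obtain ⟨i1, hi1⟩ : ∃ i : Fin l, (i : ℕ) = l - 2 := ⟨⟨l - 2, by omega⟩, rfl⟩
    have a1 : (GLGraph l).Adj (.x i0) .v := adj_xv hi0
    have a2 : (GLGraph l).Adj (.y i0) .v := adj_yv hi0
    have a3 : (GLGraph l).Adj (.x i0) (.y i0) := adj_xy i0
    have a4 : (GLGraph l).Adj (.x i1) (.x i0) := adj_xx (by omega)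
    have a5 : (GLGraph l).Adj (.y i1) (.y i0) := adj_yy (by omega)
    have a6 : (GLGraph l).Adj (.x i1) (.y i1) := adj_xy i1
    have d1 : (GLGraph l).dist .v (.x i1) = 2 :=
      dist_eq_two_of a1.symm a4.symm (by nofun) (fun h => not_adj_xv (by omega) h.symm)
    have d2 : (GLGraph l).dist .v (.y i1) = 2 :=
      dist_eq_two_of a2.symm a5.symm (by nofun) (fun h => not_adj_yv (by omega) h.symm)
    have d3 : (GLGraph l).dist (.x i0) (.y i1) = 2 :=
      dist_eq_two_of a3 a5.symm (by nofun) (not_adj_xy (Fin.ne_of_val_ne (by omega)))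
    have d4 : (GLGraph l).dist (.y i0) (.x i1) = 2 :=
      dist_eq_two_of a3.symm a4.symm (by nofun)
        (fun h => not_adj_xy (Fin.ne_of_val_ne (by omega)) h.symm)
    have p1 := hcon _ a1.symm; have p2 := hcon _ a2.symm
    have e1 := hD _ _ a1; have e2 := hD _ _ a2; have e3 := hD _ _ a3
    have e4 := hD _ _ a4; have e5 := hD _ _ a5; have e6 := hD _ _ a6
    have n1 := hN _ _ d1; have n2 := hN _ _ d2; have n3 := hN _ _ d3; have n4 := hN _ _ d4
    have b0 := hB (.v); have b1 := hB (.x i0); have b2 := hB (.y i0)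
    have b3 := hB (.x i1); have b4 := hB (.y i1)
    omega
  | x i =>
    have hil := i.isLt
    have a1 : (GLGraph l).Adj (.x i) (.y i) := adj_xy i
    by_cases h0 : (i : ℕ) = 0
    · obtain ⟨i1, hi1⟩ : ∃ j : Fin l, (j : ℕ) = 1 := ⟨⟨1, by omega⟩, rfl⟩
      have a2 : (GLGraph l).Adj .u (.x i) := adj_ux h0
      have a3 : (GLGraph l).Adj (.x i) (.x i1) := adj_xx (by omega)
      have a4 : (GLGraph l).Adj .u (.y i) := adj_uy h0
      have d1 : (GLGraph l).dist .u (.x i1) = 2 :=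
        dist_eq_two_of a2 a3 (by nofun) (not_adj_ux (by omega))
      have d2 : (GLGraph l).dist (.y i) (.x i1) = 2 :=
        dist_eq_two_of a1.symm a3 (by nofun)
          (fun h => not_adj_xy (Fin.ne_of_val_ne (by omega)) h.symm)
      have p1 := hcon _ a1; have p2 := hcon _ a2.symm; have p3 := hcon _ a3
      have e1 := hD _ _ a1; have e2 := hD _ _ a2; have e3 := hD _ _ a3; have e4 := hD _ _ a4
      have n1 := hN _ _ d1; have n2 := hN _ _ d2
      have b0 := hB (.x i); have b1 := hB (.y i); have b2 := hB (.u); have b3 := hB (.x i1)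
      omega
    · by_cases hL : (i : ℕ) = l - 1
      · obtain ⟨im, him⟩ : ∃ j : Fin l, (j : ℕ) = (i : ℕ) - 1 := ⟨⟨(i : ℕ) - 1, by omega⟩, rfl⟩
        have a2 : (GLGraph l).Adj (.x im) (.x i) := adj_xx (by omega)
        have a3 : (GLGraph l).Adj (.x i) .v := adj_xv hL
        have a4 : (GLGraph l).Adj (.y i) .v := adj_yv hL
        have d1 : (GLGraph l).dist (.x im) .v = 2 :=
          dist_eq_two_of a2 a3 (by nofun) (not_adj_xv (by omega))
        have d2 : (GLGraph l).dist (.x im) (.y i) = 2 :=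
          dist_eq_two_of a2 a1 (by nofun) (not_adj_xy (Fin.ne_of_val_ne (by omega)))
        have p1 := hcon _ a1; have p2 := hcon _ a2.symm; have p3 := hcon _ a3
        have e1 := hD _ _ a1; have e2 := hD _ _ a2; have e3 := hD _ _ a3; have e4 := hD _ _ a4
        have n1 := hN _ _ d1; have n2 := hN _ _ d2
        have b0 := hB (.x i); have b1 := hB (.y i); have b2 := hB (.x im); have b3 := hB (.v)
        omega
      · obtain ⟨im, him⟩ : ∃ j : Fin l, (j : ℕ) = (i : ℕ) - 1 := ⟨⟨(i : ℕ) - 1, by omega⟩, rfl⟩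
        obtain ⟨ip, hip⟩ : ∃ j : Fin l, (j : ℕ) = (i : ℕ) + 1 := ⟨⟨(i : ℕ) + 1, by omega⟩, rfl⟩
        have a2 : (GLGraph l).Adj (.x im) (.x i) := adj_xx (by omega)
        have a3 : (GLGraph l).Adj (.x i) (.x ip) := adj_xx (by omega)
        have d1 : (GLGraph l).dist (.x im) (.x ip) = 2 :=
          dist_eq_two_of a2 a3 (x_ne_x (by omega)) (not_adj_xx (by omega) (by omega))
        have d2 : (GLGraph l).dist (.x im) (.y i) = 2 :=
          dist_eq_two_of a2 a1 (by nofun) (not_adj_xy (Fin.ne_of_val_ne (by omega)))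
        have d3 : (GLGraph l).dist (.y i) (.x ip) = 2 :=
          dist_eq_two_of a1.symm a3 (by nofun)
            (fun h => not_adj_xy (Fin.ne_of_val_ne (by omega)) h.symm)
        have p1 := hcon _ a1; have p2 := hcon _ a2.symm; have p3 := hcon _ a3
        have e1 := hD _ _ a1; have e2 := hD _ _ a2; have e3 := hD _ _ a3
        have n1 := hN _ _ d1; have n2 := hN _ _ d2; have n3 := hN _ _ d3
        have b0 := hB (.x i); have b1 := hB (.y i); have b2 := hB (.x im); have b3 := hB (.x ip)
        omega
  | y i =>
    have hil := i.isLt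
    have a1 : (GLGraph l).Adj (.x i) (.y i) := adj_xy i
    by_cases h0 : (i : ℕ) = 0
    · obtain ⟨i1, hi1⟩ : ∃ j : Fin l, (j : ℕ) = 1 := ⟨⟨1, by omega⟩, rfl⟩
      have a2 : (GLGraph l).Adj .u (.y i) := adj_uy h0
      have a3 : (GLGraph l).Adj (.y i) (.y i1) := adj_yy (by omega)
      have a4 : (GLGraph l).Adj .u (.x i) := adj_ux h0
      have d1 : (GLGraph l).dist .u (.y i1) = 2 :=
        dist_eq_two_of a2 a3 (by nofun) (not_adj_uy (by omega))
      have d2 : (GLGraph l).dist (.x i) (.y i1) = 2 :=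
        dist_eq_two_of a1 a3 (by nofun) (not_adj_xy (Fin.ne_of_val_ne (by omega)))
      have p1 := hcon _ a1.symm; have p2 := hcon _ a2.symm; have p3 := hcon _ a3
      have e1 := hD _ _ a1; have e2 := hD _ _ a2; have e3 := hD _ _ a3; have e4 := hD _ _ a4
      have n1 := hN _ _ d1; have n2 := hN _ _ d2
      have b0 := hB (.y i); have b1 := hB (.x i); have b2 := hB (.u); have b3 := hB (.y i1)
      omega
    · by_cases hL : (i : ℕ) = l - 1
      · obtain ⟨im, him⟩ : ∃ j : Fin l, (j : ℕ) = (i : ℕ) - 1 := ⟨⟨(i : ℕ) - 1, by omega⟩, rfl⟩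
        have a2 : (GLGraph l).Adj (.y im) (.y i) := adj_yy (by omega)
        have a3 : (GLGraph l).Adj (.y i) .v := adj_yv hL
        have a4 : (GLGraph l).Adj (.x i) .v := adj_xv hL
        have d1 : (GLGraph l).dist (.y im) .v = 2 :=
          dist_eq_two_of a2 a3 (by nofun) (not_adj_yv (by omega))
        have d2 : (GLGraph l).dist (.y im) (.x i) = 2 :=
          dist_eq_two_of a2 a1.symm (by nofun)
            (fun h => not_adj_xy (Fin.ne_of_val_ne (by omega)) h.symm)
        have p1 := hcon _ a1.symm; have p2 := hcon _ a2.symm; have p3 := hcon _ a3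
        have e1 := hD _ _ a1; have e2 := hD _ _ a2; have e3 := hD _ _ a3; have e4 := hD _ _ a4
        have n1 := hN _ _ d1; have n2 := hN _ _ d2
        have b0 := hB (.y i); have b1 := hB (.x i); have b2 := hB (.y im); have b3 := hB (.v)
        omega
      · obtain ⟨im, him⟩ : ∃ j : Fin l, (j : ℕ) = (i : ℕ) - 1 := ⟨⟨(i : ℕ) - 1, by omega⟩, rfl⟩
        obtain ⟨ip, hip⟩ : ∃ j : Fin l, (j : ℕ) = (i : ℕ) + 1 := ⟨⟨(i : ℕ) + 1, by omega⟩, rfl⟩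
        have a2 : (GLGraph l).Adj (.y im) (.y i) := adj_yy (by omega)
        have a3 : (GLGraph l).Adj (.y i) (.y ip) := adj_yy (by omega)
        have d1 : (GLGraph l).dist (.y im) (.y ip) = 2 :=
          dist_eq_two_of a2 a3 (y_ne_y (by omega)) (not_adj_yy (by omega) (by omega))
        have d2 : (GLGraph l).dist (.y im) (.x i) = 2 :=
          dist_eq_two_of a2 a1.symm (by nofun)
            (fun h => not_adj_xy (Fin.ne_of_val_ne (by omega)) h.symm)
        have d3 : (GLGraph l).dist (.x i) (.y ip) = 2 :=
          dist_eq_two_of a1 a3 (by nofun) (not_adj_xy (Fin.ne_of_val_ne (by omega)))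
        have p1 := hcon _ a1.symm; have p2 := hcon _ a2.symm; have p3 := hcon _ a3
        have e1 := hD _ _ a1; have e2 := hD _ _ a2; have e3 := hD _ _ a3
        have n1 := hN _ _ d1; have n2 := hN _ _ d2; have n3 := hN _ _ d3
        have b0 := hB (.y i); have b1 := hB (.x i); have b2 := hB (.y im); have b3 := hB (.y ip)
        omega

end Helpers

theorem stmt3 (l : ℕ) (hl : 3 ≤ l) (f : GLVert l → ℕ)
    (hf : IsKL21Labeling (GLGraph l) 5 f)
    (T : Set (GLVert l))
    (hT : IsCompOf (GLGraph l) (H1Set l f) T ∨ IsCompOf (GLGraph l) (H2Set l f) T) :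
    ∃ a ∈ T, ∃ b ∈ T, a ≠ b := by
  have hB : ∀ a : GLVert l, f a ≤ 5 := hf.2
  obtain hT | hT := hT
  · obtain ⟨c, rfl⟩ := hT
    obtain ⟨w₀, rfl⟩ := c.exists_rep
    obtain ⟨w', hadj, hpar⟩ := exists_parity_neighbor l hl f hf w₀.val
    have hw0S : w₀.val ∈ H1Set l f := w₀.2
    have hw'S : w' ∈ H1Set l f := by
      have h1 := hB w₀.val; have h2 := hB w'
      simp only [H1Set, Set.mem_setOf_eq] at hw0S ⊢
      omega
    refine ⟨w₀.val, ⟨w₀, rfl, rfl⟩, w', ⟨⟨w', hw'S⟩, ?_, rfl⟩, hadj.ne⟩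
    exact (SimpleGraph.ConnectedComponent.connectedComponentMk_eq_of_adj
      (by simpa using hadj : ((GLGraph l).induce (H1Set l f)).Adj w₀ ⟨w', hw'S⟩)).symm
  · obtain ⟨c, rfl⟩ := hT
    obtain ⟨w₀, rfl⟩ := c.exists_rep
    obtain ⟨w', hadj, hpar⟩ := exists_parity_neighbor l hl f hf w₀.val
    have hw0S : w₀.val ∈ H2Set l f := w₀.2
    have hw'S : w' ∈ H2Set l f := by
      have h1 := hB w₀.val; have h2 := hB w'
      simp only [H2Set, Set.mem_setOf_eq] at hw0S ⊢
      omega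
    refine ⟨w₀.val, ⟨w₀, rfl, rfl⟩, w', ⟨⟨w', hw'S⟩, ?_, rfl⟩, hadj.ne⟩
    exact (SimpleGraph.ConnectedComponent.connectedComponentMk_eq_of_adj
      (by simpa using hadj : ((GLGraph l).induce (H2Set l f)).Adj w₀ ⟨w', hw'S⟩)).symm
end

section
/- Let l ≥ 3, let f be a 5-L(2,1)-labeling of G(l), and let H be a connected component of H_1 or of H_2. Then: (i) there is no index i with 1 ≤ i ≤ l−1 such that all four vertices x_i, x_{i+1}, y_i, y_{i+1} belong to V(H); and (ii) there is no vertex w of degree 3 in G(l) such that w and all three of its neighbors belong to V(H). -/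
lemma dist2_aux {V : Type*} (G : SimpleGraph V) {a b c : V} (hne : a ≠ b)
    (hnadj : ¬ G.Adj a b) (h1 : G.Adj a c) (h2 : G.Adj c b) : G.dist a b = 2 := by
  have hle : G.dist a b ≤ 2 := by
    have := SimpleGraph.dist_le (h1.toWalk.append h2.toWalk)
    simpa using this
  have h0 : G.dist a b ≠ 0 := by
    rw [ne_eq, SimpleGraph.dist_eq_zero_iff_eq_or_not_reachable]
    push_neg
    exact ⟨hne, ⟨(h1.toWalk.append h2.toWalk)⟩⟩
  have h1' : G.dist a b ≠ 1 := by
    rw [ne_eq, SimpleGraph.dist_eq_one_iff_adj]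
    exact hnadj
  omega

theorem stmt4 (l : ℕ) (hl : 3 ≤ l) (f : GLVert l → ℕ)
    (hf : IsKL21Labeling (GLGraph l) 5 f)
    (T : Set (GLVert l))
    (hT : IsCompOf (GLGraph l) (H1Set l f) T ∨ IsCompOf (GLGraph l) (H2Set l f) T) :
    (¬ ∃ i j : Fin l, (i : ℕ) + 1 = (j : ℕ) ∧
        GLVert.x i ∈ T ∧ GLVert.x j ∈ T ∧ GLVert.y i ∈ T ∧ GLVert.y j ∈ T) ∧
    (¬ ∃ w : GLVert l, {z | (GLGraph l).Adj w z}.ncard = 3 ∧ w ∈ T ∧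
        ∀ z, (GLGraph l).Adj w z → z ∈ T) := by

  obtain ⟨⟨hadj2, hdist⟩, hbd⟩ := hf
  set G := GLGraph l with hG
  have hne : ∀ a b, G.Adj a b → f a ≠ f b := by
    intro a b h heq
    have := hadj2 a b h
    rw [heq] at this
    simp at this
  have hd2 : ∀ a b c, a ≠ b → ¬ G.Adj a b → G.Adj a c → G.Adj c b → f a ≠ f b := by
    intro a b c h1 h2 h3 h4
    exact hdist a b (dist2_aux G h1 h2 h3 h4)
  have hsub : (∀ w ∈ T, f w = 0 ∨ f w = 2 ∨ f w = 4) ∨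
      (∀ w ∈ T, f w = 1 ∨ f w = 3 ∨ f w = 5) := by
    rcases hT with ⟨c, hc⟩ | ⟨c, hc⟩
    · left; intro w hw
      rw [hc] at hw
      obtain ⟨z, _, rfl⟩ := hw
      exact z.2
    · right; intro w hw
      rw [hc] at hw
      obtain ⟨z, _, rfl⟩ := hw
      exact z.2
  have pair : ∀ w p q : GLVert l, G.Adj w p → G.Adj w q → p ≠ q → f p ≠ f q := by
    intro w p q hp hq hpq
    by_cases h : G.Adj p q
    · exact hne p q h
    · exact hd2 p q w hpq h hp.symm hq
  constructor
  · rintro ⟨i, j, hij, hxi, hxj, hyi, hyj⟩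
    have hilt := i.isLt
    have hjlt := j.isLt
    have hijne : i ≠ j := by
      intro h; rw [h] at hij; omega
    have A1 : G.Adj (.x i) (.x j) := by
      rw [hG, GLGraph, SimpleGraph.fromRel_adj]
      refine ⟨by simp [hijne], Or.inl ?_⟩
      simpa [GLRel] using hij
    have A2 : G.Adj (.x i) (.y i) := by
      rw [hG, GLGraph, SimpleGraph.fromRel_adj]
      exact ⟨by simp, Or.inl (by simp [GLRel])⟩
    have A3 : G.Adj (.y i) (.y j) := by
      rw [hG, GLGraph, SimpleGraph.fromRel_adj]
      refine ⟨by simp [hijne], Or.inl ?_⟩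
      simpa [GLRel] using hij
    have A4 : G.Adj (.x j) (.y j) := by
      rw [hG, GLGraph, SimpleGraph.fromRel_adj]
      exact ⟨by simp, Or.inl (by simp [GLRel])⟩
    have N1 : ¬ G.Adj (.x i) (.y j) := by
      rw [hG, GLGraph, SimpleGraph.fromRel_adj]
      rintro ⟨-, h | h⟩
      · simp [GLRel] at h; exact hijne h
      · simp [GLRel] at h
    have N2 : ¬ G.Adj (.y i) (.x j) := by
      rw [hG, GLGraph, SimpleGraph.fromRel_adj]
      rintro ⟨-, h | h⟩
      · simp [GLRel] at h
      · simp [GLRel] at h; exact hijne h.symm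
    have d1 := hne _ _ A1
    have d2 := hne _ _ A2
    have d3 := hne _ _ A3
    have d4 := hne _ _ A4
    have d5 : f (GLVert.x i) ≠ f (GLVert.y j) :=
      hd2 _ _ (.x j) (by simp [hijne]) N1 A1 A4
    have d6 : f (GLVert.y i) ≠ f (GLVert.x j) :=
      hd2 _ _ (.y j) (by simp) N2 A3 A4.symm
    rcases hsub with hs | hs
    · have m1 := hs _ hxi
      have m2 := hs _ hxj
      have m3 := hs _ hyi
      have m4 := hs _ hyj
      omega
    · have m1 := hs _ hxi
      have m2 := hs _ hxj
      have m3 := hs _ hyi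
      have m4 := hs _ hyj
      omega
  · rintro ⟨w, hdeg, hwT, hnb⟩
    rw [Set.ncard_eq_three] at hdeg
    obtain ⟨a, b, c, hab, hac, hbc, hset⟩ := hdeg
    have ha : G.Adj w a := by
      have : a ∈ ({a, b, c} : Set (GLVert l)) := by simp
      rw [← hset] at this; exact this
    have hb : G.Adj w b := by
      have : b ∈ ({a, b, c} : Set (GLVert l)) := by simp
      rw [← hset] at this; exact this
    have hc : G.Adj w c := by
      have : c ∈ ({a, b, c} : Set (GLVert l)) := by simp
      rw [← hset] at this; exact this
    have d1 := hne _ _ ha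
    have d2 := hne _ _ hb
    have d3 := hne _ _ hc
    have d4 := pair w a b ha hb hab
    have d5 := pair w a c ha hc hac
    have d6 := pair w b c hb hc hbc
    rcases hsub with hs | hs
    · have m0 := hs _ hwT
      have m1 := hs _ (hnb a ha)
      have m2 := hs _ (hnb b hb)
      have m3 := hs _ (hnb c hc)
      omega
    · have m0 := hs _ hwT
      have m1 := hs _ (hnb a ha)
      have m2 := hs _ (hnb b hb)
      have m3 := hs _ (hnb c hc)
      omega
end

section
/- Let l ≥ 3, let f be a 5-L(2,1)-labeling of G(l), let i ∈ {1, 2}, and let H be a connected component of H_i that is a path (a path component). If w is an end vertex of the path H and w has degree 3 in G(l), then f(w) = 0 when i = 1, and f(w) = 5 when i = 2. -/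
/-- The (induced) subgraph of `G` with vertex set `T` is a path: there is an ordering
of `T` in which exactly the consecutive vertices are adjacent. -/
def IsPathSet {V : Type*} (G : SimpleGraph V) (T : Set V) : Prop :=
  ∃ (n : ℕ) (p : Fin (n + 1) → V), Function.Injective p ∧ T = Set.range p ∧
    ∀ i j : Fin (n + 1), G.Adj (p i) (p j) ↔ ((i : ℕ) + 1 = (j : ℕ) ∨ (j : ℕ) + 1 = (i : ℕ))

/-- `w` is an end vertex of the path with vertex set `T`. -/
def IsPathEnd {V : Type*} (G : SimpleGraph V) (T : Set V) (w : V) : Prop :=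
  ∃ (n : ℕ) (p : Fin (n + 1) → V), Function.Injective p ∧ T = Set.range p ∧
    (∀ i j : Fin (n + 1), G.Adj (p i) (p j) ↔ ((i : ℕ) + 1 = (j : ℕ) ∨ (j : ℕ) + 1 = (i : ℕ))) ∧
    (w = p 0 ∨ w = p (Fin.last n))

lemma my_labels_ne {V : Type*} {G : SimpleGraph V} {f : V → ℕ}
    (hf : IsL21Labeling G f) {w a b : V} (ha : G.Adj w a) (hb : G.Adj w b)
    (hab : a ≠ b) : f a ≠ f b := by
  by_cases hadj : G.Adj a b
  · have h := hf.1 a b hadj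
    omega
  · have p : G.Walk a b :=
      SimpleGraph.Walk.cons ha.symm (SimpleGraph.Walk.cons hb SimpleGraph.Walk.nil)
    have hd : G.dist a b = 2 := by
      have h2 : G.dist a b ≤ 2 := by
        simpa using SimpleGraph.dist_le
          (SimpleGraph.Walk.cons ha.symm (SimpleGraph.Walk.cons hb SimpleGraph.Walk.nil))
      have h0 : G.dist a b ≠ 0 := by
        intro h
        rcases SimpleGraph.dist_eq_zero_iff_eq_or_not_reachable.mp h with h' | h'
        · exact hab h'
        · exact h' ⟨p⟩
      have h1 : G.dist a b ≠ 1 := fun h => hadj (SimpleGraph.dist_eq_one_iff_adj.mp h)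
      omega
    exact hf.2 a b hd

lemma my_uniq_nb {V : Type*} {G : SimpleGraph V} {T : Set V} {w : V}
    (hend : IsPathEnd G T w) {z1 z2 : V} (h1 : G.Adj w z1) (h2 : G.Adj w z2)
    (hz1 : z1 ∈ T) (hz2 : z2 ∈ T) : z1 = z2 := by
  obtain ⟨n, p, hinj, hrange, hadj, hw⟩ := hend
  rw [hrange] at hz1 hz2
  obtain ⟨j1, rfl⟩ := hz1
  obtain ⟨j2, rfl⟩ := hz2
  rcases hw with hw | hw
  · rw [hw] at h1 h2
    have a1 := (hadj 0 j1).1 h1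
    have a2 := (hadj 0 j2).1 h2
    simp only [Fin.val_zero] at a1 a2
    have : j1 = j2 := Fin.ext (by omega)
    rw [this]
  · rw [hw] at h1 h2
    have a1 := (hadj (Fin.last n) j1).1 h1
    have a2 := (hadj (Fin.last n) j2).1 h2
    simp only [Fin.val_last] at a1 a2
    have hj1 := j1.isLt
    have hj2 := j2.isLt
    have : j1 = j2 := Fin.ext (by omega)
    rw [this]

lemma my_comp_sub {V : Type*} {G : SimpleGraph V} {S T : Set V}
    (hc : IsCompOf G S T) : T ⊆ S := by
  obtain ⟨c, rfl⟩ := hc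
  rintro _ ⟨⟨z, hz⟩, -, rfl⟩
  exact hz

lemma my_comp_mem {V : Type*} {G : SimpleGraph V} {S T : Set V}
    (hc : IsCompOf G S T) {w z : V} (hw : w ∈ T) (hz : z ∈ S)
    (hadj : G.Adj w z) : z ∈ T := by
  obtain ⟨c, rfl⟩ := hc
  obtain ⟨⟨w', hw'⟩, hmk, heq⟩ := hw
  simp only at heq
  subst heq
  refine ⟨⟨z, hz⟩, ?_, rfl⟩
  have hadj' : (G.induce S).Adj ⟨w', hw'⟩ ⟨z, hz⟩ := by
    simpa [SimpleGraph.comap] using hadj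
  have : (G.induce S).connectedComponentMk ⟨z, hz⟩
      = (G.induce S).connectedComponentMk ⟨w', hw'⟩ :=
    SimpleGraph.ConnectedComponent.sound hadj'.symm.reachable
  simp only [Set.mem_setOf_eq] at hmk ⊢
  rw [this, hmk]

lemma my_two_of_three {α : Type*} (f : α → ℕ) (a b c : α)
    (hab : f a ≠ f b) (hac : f a ≠ f c) (hbc : f b ≠ f c) (o : ℕ) :
    ∃ z1 z2, (z1 = a ∨ z1 = b ∨ z1 = c) ∧ (z2 = a ∨ z2 = b ∨ z2 = c) ∧
      f z1 ≠ f z2 ∧ f z1 ≠ o ∧ f z2 ≠ o := by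
  by_cases h1 : f a = o
  · exact ⟨b, c, Or.inr (Or.inl rfl), Or.inr (Or.inr rfl), hbc, by omega, by omega⟩
  · by_cases h2 : f b = o
    · exact ⟨a, c, Or.inl rfl, Or.inr (Or.inr rfl), hac, h1, by omega⟩
    · exact ⟨a, b, Or.inl rfl, Or.inr (Or.inl rfl), hab, h1, h2⟩

lemma my_main_aux {V : Type*} {G : SimpleGraph V} {f : V → ℕ}
    (hf : IsL21Labeling G f) (hk : ∀ a, f a ≤ 5) {T : Set V} {w : V} (r : ℕ) (hr : r ≤ 1)
    (hc : IsCompOf G {z | f z % 2 = r} T)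
    (hend : IsPathEnd G T w)
    (hdeg : {z | G.Adj w z}.ncard = 3) :
    f w = 5 * r := by
  have hwT : w ∈ T := by
    obtain ⟨n, p, -, hrange, -, hw⟩ := hend
    rw [hrange]
    rcases hw with hw | hw <;> exact ⟨_, hw.symm⟩
  have hwS : f w % 2 = r := my_comp_sub hc hwT
  have hw5 : f w ≤ 5 := hk w
  by_cases hfw : f w = 5 * r
  · exact hfw
  exfalso
  obtain ⟨a, b, c, hab, hac, hbc, hs⟩ := Set.ncard_eq_three.mp hdeg
  have ha : G.Adj w a := by
    have : a ∈ ({a, b, c} : Set V) := by simp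
    rw [← hs] at this; exact this
  have hb : G.Adj w b := by
    have : b ∈ ({a, b, c} : Set V) := by simp
    rw [← hs] at this; exact this
  have hcadj : G.Adj w c := by
    have : c ∈ ({a, b, c} : Set V) := by simp
    rw [← hs] at this; exact this
  have fab : f a ≠ f b := my_labels_ne hf ha hb hab
  have fac : f a ≠ f c := my_labels_ne hf ha hcadj hac
  have fbc : f b ≠ f c := my_labels_ne hf hb hcadj hbc
  obtain ⟨z1, z2, hz1, hz2, hne, ho1, ho2⟩ :=
    my_two_of_three f a b c fab fac fbc ((f w + 3) % 6)
  have hz1adj : G.Adj w z1 := by rcases hz1 with rfl | rfl | rfl <;> assumption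
  have hz2adj : G.Adj w z2 := by rcases hz2 with rfl | rfl | rfl <;> assumption
  have key : ∀ z : V, G.Adj w z → f z ≠ (f w + 3) % 6 → f z % 2 = r := by
    intro z hz hzo
    have h1 := hf.1 w z hz
    have h2 := hk z
    omega
  have hz1S : z1 ∈ {z | f z % 2 = r} := key z1 hz1adj ho1
  have hz2S : z2 ∈ {z | f z % 2 = r} := key z2 hz2adj ho2
  have hz1T := my_comp_mem hc hwT hz1S hz1adj
  have hz2T := my_comp_mem hc hwT hz2S hz2adj
  exact hne (by rw [my_uniq_nb hend hz1adj hz2adj hz1T hz2T])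

theorem stmt6 (l : ℕ) (hl : 3 ≤ l) (f : GLVert l → ℕ)
    (hf : IsKL21Labeling (GLGraph l) 5 f)
    (T : Set (GLVert l)) (w : GLVert l)
    (hT : IsCompOf (GLGraph l) (H1Set l f) T ∨ IsCompOf (GLGraph l) (H2Set l f) T)
    (hpath : IsPathSet (GLGraph l) T)
    (hend : IsPathEnd (GLGraph l) T w)
    (hdeg : {z | (GLGraph l).Adj w z}.ncard = 3) :
    (IsCompOf (GLGraph l) (H1Set l f) T → f w = 0) ∧
    (IsCompOf (GLGraph l) (H2Set l f) T → f w = 5) := by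
  constructor
  · intro hc
    have hSeq : H1Set l f = {z | f z % 2 = 0} := by
      ext z
      have := hf.2 z
      simp only [H1Set, Set.mem_setOf_eq]
      omega
    rw [hSeq] at hc
    have := my_main_aux hf.1 hf.2 0 (by omega) hc hend hdeg
    simpa using this
  · intro hc
    have hSeq : H2Set l f = {z | f z % 2 = 1} := by
      ext z
      have := hf.2 z
      simp only [H2Set, Set.mem_setOf_eq]
      omega
    rw [hSeq] at hc
    have := my_main_aux hf.1 hf.2 1 (by omega) hc hend hdeg
    simpa using this
end

section
/- Let l ≥ 3, let f be a 5-L(2,1)-labeling of G(l), and let H be a path component of H_1 or of H_2. Then: (i) if H contains the 2-path x_i y_i y_{i+1} (respectively, y_i x_i x_{i+1}) and x_i (respectively, y_i) is an end vertex of the path H, then i = 2; and (ii) if H contains the 2-path x_i y_i y_{i−1} (respectively, y_i x_i x_{i−1}) and x_i (respectively, y_i) is an end vertex of the path H, then i = l−1. -/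
section Auxiliary

lemma dist_eq_two' {V : Type*} {G : SimpleGraph V} {a b c : V}
    (hab : G.Adj a b) (hbc : G.Adj b c) (hac : ¬ G.Adj a c) (hne : a ≠ c) :
    G.dist a c = 2 := by
  have hw : G.dist a c ≤ 2 := by
    have := G.dist_le (SimpleGraph.Walk.cons hab (SimpleGraph.Walk.cons hbc SimpleGraph.Walk.nil))
    simpa using this
  have hr : G.Reachable a c :=
    ⟨SimpleGraph.Walk.cons hab (SimpleGraph.Walk.cons hbc SimpleGraph.Walk.nil)⟩
  have h0 : G.dist a c ≠ 0 := fun h => hne (hr.dist_eq_zero_iff.mp h)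
  have h1 : G.dist a c ≠ 1 := fun h => hac (SimpleGraph.dist_eq_one_iff_adj.mp h)
  omega

lemma IsCompOf.subset' {V : Type*} {G : SimpleGraph V} {S T : Set V}
    (h : IsCompOf G S T) : T ⊆ S := by
  obtain ⟨c, rfl⟩ := h
  rintro w ⟨⟨w, hw⟩, _, rfl⟩
  exact hw

lemma IsCompOf.closed' {V : Type*} {G : SimpleGraph V} {S T : Set V}
    (h : IsCompOf G S T) {a b : V} (ha : a ∈ T) (hb : b ∈ S) (hadj : G.Adj a b) :
    b ∈ T := by
  have haS : a ∈ S := h.subset' ha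
  obtain ⟨c, rfl⟩ := h
  obtain ⟨⟨a', ha'S⟩, hc, heq⟩ := ha
  refine ⟨⟨b, hb⟩, ?_, rfl⟩
  have hadj' : (G.induce S).Adj ⟨b, hb⟩ ⟨a', ha'S⟩ := by
    simp only [SimpleGraph.comap_adj, Function.Embedding.coe_subtype]
    simp only [Subtype.coe_mk] at heq
    subst heq
    exact hadj.symm
  simp only [Set.mem_setOf_eq]
  rw [SimpleGraph.ConnectedComponent.connectedComponentMk_eq_of_adj hadj']
  exact hc

lemma IsPathEnd.nbr_unique {V : Type*} {G : SimpleGraph V} {T : Set V} {w : V}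
    (h : IsPathEnd G T w) {a b : V} (ha : a ∈ T) (hb : b ∈ T)
    (hwa : G.Adj w a) (hwb : G.Adj w b) : a = b := by
  obtain ⟨n, p, hinj, rfl, hiff, hend⟩ := h
  obtain ⟨k, rfl⟩ := ha
  obtain ⟨m, rfl⟩ := hb
  rcases hend with rfl | rfl
  · have hk := (hiff 0 k).mp hwa
    have hm := (hiff 0 m).mp hwb
    simp only [Fin.val_zero] at hk hm
    have : (k : ℕ) = (m : ℕ) := by omega
    exact congrArg p (Fin.ext this)
  · have hk := (hiff (Fin.last n) k).mp hwa
    have hm := (hiff (Fin.last n) m).mp hwb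
    simp only [Fin.val_last] at hk hm
    have hk' : (k : ℕ) ≤ n := Nat.lt_succ_iff.mp k.isLt
    have hm' : (m : ℕ) ≤ n := Nat.lt_succ_iff.mp m.isLt
    have : (k : ℕ) = (m : ℕ) := by omega
    exact congrArg p (Fin.ext this)

lemma st1' (A0 A1 A3 : ℕ) (E0 : A0 = 0 ∨ A0 = 2 ∨ A0 = 4)
    (O1 : ¬(A1 = 0 ∨ A1 = 2 ∨ A1 = 4)) (u1 : A1 ≤ 5)
    (O3 : ¬(A3 = 0 ∨ A3 = 2 ∨ A3 = 4)) (u3 : A3 ≤ 5)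
    (n2 : 2 ≤ ((A1:ℤ) - A0).natAbs) (n3 : 2 ≤ ((A0:ℤ) - A3).natAbs)
    (m1 : A1 ≠ A3) : A0 = 0 ∧ (A1 = 3 ∨ A1 = 5) ∧ (A3 = 3 ∨ A3 = 5) := by omega

lemma st2' (A0 A3 B0 B3 : ℕ) (hA0 : A0 = 0) (hA3 : A3 = 3 ∨ A3 = 5)
    (Eb0 : B0 = 0 ∨ B0 = 2 ∨ B0 = 4) (Eb3 : B3 = 0 ∨ B3 = 2 ∨ B3 = 4)
    (n6 : 2 ≤ ((B0:ℤ) - B3).natAbs) (n7 : 2 ≤ ((A0:ℤ) - B0).natAbs)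
    (n10 : 2 ≤ ((A3:ℤ) - B3).natAbs) (m2 : A0 ≠ B3) :
    B3 = 2 ∧ A3 = 5 ∧ B0 = 4 := by omega

lemma st3' (A1 A3 : ℕ) (hA1 : A1 = 3 ∨ A1 = 5) (hA3 : A3 = 5) (m1 : A1 ≠ A3) :
    A1 = 3 := by omega

lemma st4' (A0 A1 B0 B1 : ℕ) (hA0 : A0 = 0) (hA1 : A1 = 3) (hB0 : B0 = 4)
    (ub1 : B1 ≤ 5) (n5 : 2 ≤ ((B1:ℤ) - B0).natAbs) (n8 : 2 ≤ ((A1:ℤ) - B1).natAbs)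
    (m3 : A0 ≠ B1) : B1 = 1 := by omega

lemma st5' (A0 A1 A2 B1 : ℕ) (hA0 : A0 = 0) (hA1 : A1 = 3) (hB1 : B1 = 1)
    (u2 : A2 ≤ 5) (n1 : 2 ≤ ((A2:ℤ) - A1).natAbs)
    (m4 : A2 ≠ A0) (m5 : A2 ≠ B1) : A2 = 5 := by omega

lemma st6' (A1 A2 B1 B2 : ℕ) (hA1 : A1 = 3) (hA2 : A2 = 5) (hB1 : B1 = 1)
    (ub2 : B2 ≤ 5) (n4 : 2 ≤ ((B2:ℤ) - B1).natAbs) (n9 : 2 ≤ ((A2:ℤ) - B2).natAbs)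
    (m6 : B2 ≠ A1) : False := by omega

lemma st7' (U B0 : ℕ) (hU : U = 3) (hB0 : B0 = 4)
    (n : 2 ≤ ((U:ℤ) - B0).natAbs) : False := by omega

lemma flip_natAbs {a b : ℕ} (ha : a ≤ 5) (hb : b ≤ 5)
    (h : 2 ≤ ((a:ℤ) - b).natAbs) : 2 ≤ (((5-a : ℕ):ℤ) - ((5-b : ℕ):ℤ)).natAbs := by omega

lemma flip_ne {a b : ℕ} (ha : a ≤ 5) (hb : b ≤ 5) (h : a ≠ b) : 5 - a ≠ 5 - b := by omega

lemma flip_mem {a : ℕ} (h : a = 1 ∨ a = 3 ∨ a = 5) :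
    5 - a = 0 ∨ 5 - a = 2 ∨ 5 - a = 4 := by omega

lemma flip_nmem {a : ℕ} (ha : a ≤ 5) (h : ¬(a = 1 ∨ a = 3 ∨ a = 5)) :
    ¬(5 - a = 0 ∨ 5 - a = 2 ∨ 5 - a = 4) := by omega

/-- Core contradiction, middle case (ladder pattern
`a2-a1-a0-a3` over `b2-b1-b0-b3` with rungs `ak-bk`). -/
lemma core_mid {V : Type*} {G : SimpleGraph V} {f : V → ℕ}
    (hf : IsKL21Labeling G 5 f) {S T : Set V} (hcomp : IsCompOf G S T)
    (hpar : (∀ w, w ∈ S ↔ (f w = 0 ∨ f w = 2 ∨ f w = 4)) ∨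
            (∀ w, w ∈ S ↔ (f w = 1 ∨ f w = 3 ∨ f w = 5)))
    {a2 a1 a0 a3 b2 b1 b0 b3 : V}
    (hA21 : G.Adj a2 a1) (hA10 : G.Adj a1 a0) (hA03 : G.Adj a0 a3)
    (hB21 : G.Adj b2 b1) (hB10 : G.Adj b1 b0) (hB03 : G.Adj b0 b3)
    (hab0 : G.Adj a0 b0) (hab1 : G.Adj a1 b1) (hab2 : G.Adj a2 b2) (hab3 : G.Adj a3 b3)
    (d13 : G.dist a1 a3 = 2) (d03 : G.dist a0 b3 = 2) (d01 : G.dist a0 b1 = 2)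
    (d20 : G.dist a2 a0 = 2) (d21 : G.dist a2 b1 = 2) (db21 : G.dist b2 a1 = 2)
    (hne1 : b0 ≠ a1) (hne3 : b0 ≠ a3)
    (hT0 : a0 ∈ T) (hTb0 : b0 ∈ T) (hTb3 : b3 ∈ T)
    (hend : IsPathEnd G T a0) : False := by
  have ha1T : a1 ∉ T := fun h => hne1 (hend.nbr_unique hTb0 h hab0 hA10.symm)
  have ha3T : a3 ∉ T := fun h => hne3 (hend.nbr_unique hTb0 h hab0 hA03)
  have ha1S : a1 ∉ S := fun h => ha1T (hcomp.closed' hT0 h hA10.symm)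
  have ha3S : a3 ∉ S := fun h => ha3T (hcomp.closed' hT0 h hA03)
  have e0 := hcomp.subset' hT0
  have eb0 := hcomp.subset' hTb0
  have eb3 := hcomp.subset' hTb3
  have n1 := hf.1.1 _ _ hA21
  have n2 := hf.1.1 _ _ hA10
  have n3 := hf.1.1 _ _ hA03
  have n4 := hf.1.1 _ _ hB21
  have n5 := hf.1.1 _ _ hB10
  have n6 := hf.1.1 _ _ hB03
  have n7 := hf.1.1 _ _ hab0
  have n8 := hf.1.1 _ _ hab1
  have n9 := hf.1.1 _ _ hab2
  have n10 := hf.1.1 _ _ hab3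
  have m1 := hf.1.2 _ _ d13
  have m2 := hf.1.2 _ _ d03
  have m3 := hf.1.2 _ _ d01
  have m4 := hf.1.2 _ _ d20
  have m5 := hf.1.2 _ _ d21
  have m6 := hf.1.2 _ _ db21
  have u1 := hf.2 a1
  have u2 := hf.2 a2
  have u3 := hf.2 a3
  have ua0 := hf.2 a0
  have ub0 := hf.2 b0
  have ub1 := hf.2 b1
  have ub2 := hf.2 b2
  have ub3 := hf.2 b3
  rcases hpar with hp | hp
  · have E0 := (hp a0).mp e0
    have Eb0 := (hp b0).mp eb0
    have Eb3 := (hp b3).mp eb3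
    have O1 : ¬ (f a1 = 0 ∨ f a1 = 2 ∨ f a1 = 4) := fun h => ha1S ((hp a1).mpr h)
    have O3 : ¬ (f a3 = 0 ∨ f a3 = 2 ∨ f a3 = 4) := fun h => ha3S ((hp a3).mpr h)
    obtain ⟨hA0, hA1or, hA3or⟩ := st1' (f a0) (f a1) (f a3) E0 O1 u1 O3 u3 n2 n3 m1
    obtain ⟨hB3, hA3, hB0⟩ := st2' (f a0) (f a3) (f b0) (f b3) hA0 hA3or Eb0 Eb3 n6 n7 n10 m2
    have hA1 := st3' (f a1) (f a3) hA1or hA3 m1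
    have hB1 := st4' (f a0) (f a1) (f b0) (f b1) hA0 hA1 hB0 ub1 n5 n8 m3
    have hA2 := st5' (f a0) (f a1) (f a2) (f b1) hA0 hA1 hB1 u2 n1 m4 m5
    exact st6' (f a1) (f a2) (f b1) (f b2) hA1 hA2 hB1 ub2 n4 n9 m6
  · have E0 := (hp a0).mp e0
    have Eb0 := (hp b0).mp eb0
    have Eb3 := (hp b3).mp eb3
    have O1 : ¬ (f a1 = 1 ∨ f a1 = 3 ∨ f a1 = 5) := fun h => ha1S ((hp a1).mpr h)
    have O3 : ¬ (f a3 = 1 ∨ f a3 = 3 ∨ f a3 = 5) := fun h => ha3S ((hp a3).mpr h)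
    obtain ⟨hA0, hA1or, hA3or⟩ := st1' (5 - f a0) (5 - f a1) (5 - f a3)
      (flip_mem E0) (flip_nmem u1 O1) (Nat.sub_le 5 _) (flip_nmem u3 O3) (Nat.sub_le 5 _)
      (flip_natAbs u1 ua0 n2) (flip_natAbs ua0 u3 n3) (flip_ne u1 u3 m1)
    obtain ⟨hB3, hA3, hB0⟩ := st2' (5 - f a0) (5 - f a3) (5 - f b0) (5 - f b3) hA0 hA3or
      (flip_mem Eb0) (flip_mem Eb3) (flip_natAbs ub0 ub3 n6) (flip_natAbs ua0 ub0 n7)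
      (flip_natAbs u3 ub3 n10) (flip_ne ua0 ub3 m2)
    have hA1 := st3' (5 - f a1) (5 - f a3) hA1or hA3 (flip_ne u1 u3 m1)
    have hB1 := st4' (5 - f a0) (5 - f a1) (5 - f b0) (5 - f b1) hA0 hA1 hB0 (Nat.sub_le 5 _)
      (flip_natAbs ub1 ub0 n5) (flip_natAbs u1 ub1 n8) (flip_ne ua0 ub1 m3)
    have hA2 := st5' (5 - f a0) (5 - f a1) (5 - f a2) (5 - f b1) hA0 hA1 hB1 (Nat.sub_le 5 _)
      (flip_natAbs u2 u1 n1) (flip_ne u2 ua0 m4) (flip_ne u2 ub1 m5)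
    exact st6' (5 - f a1) (5 - f a2) (5 - f b1) (5 - f b2) hA1 hA2 hB1 (Nat.sub_le 5 _)
      (flip_natAbs ub2 ub1 n4) (flip_natAbs u2 ub2 n9) (flip_ne ub2 u1 m6)

/-- Core contradiction, boundary case (`u0` adjacent to both `a0` and `b0`). -/
lemma core_bd {V : Type*} {G : SimpleGraph V} {f : V → ℕ}
    (hf : IsKL21Labeling G 5 f) {S T : Set V} (hcomp : IsCompOf G S T)
    (hpar : (∀ w, w ∈ S ↔ (f w = 0 ∨ f w = 2 ∨ f w = 4)) ∨
            (∀ w, w ∈ S ↔ (f w = 1 ∨ f w = 3 ∨ f w = 5)))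
    {u0 a0 a3 b0 b3 : V}
    (hua : G.Adj u0 a0) (hub : G.Adj u0 b0)
    (hA03 : G.Adj a0 a3) (hB03 : G.Adj b0 b3)
    (hab0 : G.Adj a0 b0) (hab3 : G.Adj a3 b3)
    (du3 : G.dist u0 a3 = 2) (d03 : G.dist a0 b3 = 2)
    (hneu : b0 ≠ u0) (hne3 : b0 ≠ a3)
    (hT0 : a0 ∈ T) (hTb0 : b0 ∈ T) (hTb3 : b3 ∈ T)
    (hend : IsPathEnd G T a0) : False := by
  have huT : u0 ∉ T := fun h => hneu (hend.nbr_unique hTb0 h hab0 hua.symm)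
  have ha3T : a3 ∉ T := fun h => hne3 (hend.nbr_unique hTb0 h hab0 hA03)
  have huS : u0 ∉ S := fun h => huT (hcomp.closed' hT0 h hua.symm)
  have ha3S : a3 ∉ S := fun h => ha3T (hcomp.closed' hT0 h hA03)
  have e0 := hcomp.subset' hT0
  have eb0 := hcomp.subset' hTb0
  have eb3 := hcomp.subset' hTb3
  have n1 := hf.1.1 _ _ hua
  have n2 := hf.1.1 _ _ hub
  have n3 := hf.1.1 _ _ hA03
  have n4 := hf.1.1 _ _ hB03
  have n5 := hf.1.1 _ _ hab0
  have n6 := hf.1.1 _ _ hab3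
  have m1 := hf.1.2 _ _ du3
  have m2 := hf.1.2 _ _ d03
  have uu := hf.2 u0
  have u3 := hf.2 a3
  have ua0 := hf.2 a0
  have ub0 := hf.2 b0
  have ub3 := hf.2 b3
  rcases hpar with hp | hp
  · have E0 := (hp a0).mp e0
    have Eb0 := (hp b0).mp eb0
    have Eb3 := (hp b3).mp eb3
    have Ou : ¬ (f u0 = 0 ∨ f u0 = 2 ∨ f u0 = 4) := fun h => huS ((hp u0).mpr h)
    have O3 : ¬ (f a3 = 0 ∨ f a3 = 2 ∨ f a3 = 4) := fun h => ha3S ((hp a3).mpr h)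
    obtain ⟨hA0, hUor, hA3or⟩ := st1' (f a0) (f u0) (f a3) E0 Ou uu O3 u3 n1 n3 m1
    obtain ⟨hB3, hA3, hB0⟩ := st2' (f a0) (f a3) (f b0) (f b3) hA0 hA3or Eb0 Eb3 n4 n5 n6 m2
    have hU := st3' (f u0) (f a3) hUor hA3 m1
    exact st7' (f u0) (f b0) hU hB0 n2
  · have E0 := (hp a0).mp e0
    have Eb0 := (hp b0).mp eb0
    have Eb3 := (hp b3).mp eb3
    have Ou : ¬ (f u0 = 1 ∨ f u0 = 3 ∨ f u0 = 5) := fun h => huS ((hp u0).mpr h)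
    have O3 : ¬ (f a3 = 1 ∨ f a3 = 3 ∨ f a3 = 5) := fun h => ha3S ((hp a3).mpr h)
    obtain ⟨hA0, hUor, hA3or⟩ := st1' (5 - f a0) (5 - f u0) (5 - f a3)
      (flip_mem E0) (flip_nmem uu Ou) (Nat.sub_le 5 _) (flip_nmem u3 O3) (Nat.sub_le 5 _)
      (flip_natAbs uu ua0 n1) (flip_natAbs ua0 u3 n3) (flip_ne uu u3 m1)
    obtain ⟨hB3, hA3, hB0⟩ := st2' (5 - f a0) (5 - f a3) (5 - f b0) (5 - f b3) hA0 hA3or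
      (flip_mem Eb0) (flip_mem Eb3) (flip_natAbs ub0 ub3 n4) (flip_natAbs ua0 ub0 n5)
      (flip_natAbs u3 ub3 n6) (flip_ne ua0 ub3 m2)
    have hU := st3' (5 - f u0) (5 - f a3) hUor hA3 (flip_ne uu u3 m1)
    exact st7' (5 - f u0) (5 - f b0) hU hB0 (flip_natAbs uu ub0 n2)

variable {l : ℕ}

lemma glAdj_xx {i j : Fin l} :
    (GLGraph l).Adj (.x i) (.x j) ↔ ((i:ℕ)+1 = (j:ℕ) ∨ (j:ℕ)+1 = (i:ℕ)) := by
  simp only [GLGraph, SimpleGraph.fromRel_adj, GLRel, ne_eq, GLVert.x.injEq]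
  constructor
  · exact fun h => h.2
  · intro h
    refine ⟨fun heq => ?_, h⟩
    subst heq; omega

lemma glAdj_yy {i j : Fin l} :
    (GLGraph l).Adj (.y i) (.y j) ↔ ((i:ℕ)+1 = (j:ℕ) ∨ (j:ℕ)+1 = (i:ℕ)) := by
  simp only [GLGraph, SimpleGraph.fromRel_adj, GLRel, ne_eq, GLVert.y.injEq]
  constructor
  · exact fun h => h.2
  · intro h
    refine ⟨fun heq => ?_, h⟩
    subst heq; omega

lemma glAdj_xy {i j : Fin l} :
    (GLGraph l).Adj (.x i) (.y j) ↔ i = j := by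
  simp [GLGraph, SimpleGraph.fromRel_adj, GLRel]

lemma glAdj_yx {i j : Fin l} :
    (GLGraph l).Adj (.y i) (.x j) ↔ j = i := by
  simp [GLGraph, SimpleGraph.fromRel_adj, GLRel]

lemma glAdj_ux {i : Fin l} :
    (GLGraph l).Adj .u (.x i) ↔ (i:ℕ) = 0 := by
  simp [GLGraph, SimpleGraph.fromRel_adj, GLRel]

lemma glAdj_uy {i : Fin l} :
    (GLGraph l).Adj .u (.y i) ↔ (i:ℕ) = 0 := by
  simp [GLGraph, SimpleGraph.fromRel_adj, GLRel]

lemma glAdj_xv {i : Fin l} :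
    (GLGraph l).Adj (.x i) .v ↔ (i:ℕ) = l - 1 := by
  simp [GLGraph, SimpleGraph.fromRel_adj, GLRel]

lemma glAdj_yv {i : Fin l} :
    (GLGraph l).Adj (.y i) .v ↔ (i:ℕ) = l - 1 := by
  simp [GLGraph, SimpleGraph.fromRel_adj, GLRel]

lemma glx_ne_x {i j : Fin l} (h : (i:ℕ) ≠ (j:ℕ)) : (GLVert.x i : GLVert l) ≠ .x j := by
  intro he
  injection he with he'
  exact h (congrArg Fin.val he')

lemma gly_ne_y {i j : Fin l} (h : (i:ℕ) ≠ (j:ℕ)) : (GLVert.y i : GLVert l) ≠ .y j := by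
  intro he
  injection he with he'
  exact h (congrArg Fin.val he')

lemma dist2_xx {i j k : Fin l} (h1 : (i:ℕ)+1=(k:ℕ) ∨ (k:ℕ)+1=(i:ℕ))
    (h2 : (k:ℕ)+1=(j:ℕ) ∨ (j:ℕ)+1=(k:ℕ))
    (h3 : (i:ℕ)+1 ≠ (j:ℕ)) (h4 : (j:ℕ)+1 ≠ (i:ℕ)) (h5 : (i:ℕ) ≠ (j:ℕ)) :
    (GLGraph l).dist (.x i) (.x j) = 2 :=
  dist_eq_two' (glAdj_xx.mpr h1) (glAdj_xx.mpr h2)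
    (fun h => by rcases glAdj_xx.mp h with h | h <;> omega) (glx_ne_x h5)

lemma dist2_yy {i j k : Fin l} (h1 : (i:ℕ)+1=(k:ℕ) ∨ (k:ℕ)+1=(i:ℕ))
    (h2 : (k:ℕ)+1=(j:ℕ) ∨ (j:ℕ)+1=(k:ℕ))
    (h3 : (i:ℕ)+1 ≠ (j:ℕ)) (h4 : (j:ℕ)+1 ≠ (i:ℕ)) (h5 : (i:ℕ) ≠ (j:ℕ)) :
    (GLGraph l).dist (.y i) (.y j) = 2 :=
  dist_eq_two' (glAdj_yy.mpr h1) (glAdj_yy.mpr h2)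
    (fun h => by rcases glAdj_yy.mp h with h | h <;> omega) (gly_ne_y h5)

lemma dist2_xy {i j : Fin l} (h : (i:ℕ)+1 = (j:ℕ) ∨ (j:ℕ)+1 = (i:ℕ)) :
    (GLGraph l).dist (.x i) (.y j) = 2 := by
  have hne : (GLVert.x i : GLVert l) ≠ .y j := fun he => by injection he
  have hnadj : ¬ (GLGraph l).Adj (.x i) (.y j) := fun ha => by
    have := glAdj_xy.mp ha
    subst this
    omega
  rcases h with h | h
  · exact dist_eq_two' (glAdj_xy.mpr rfl) (glAdj_yy.mpr (Or.inl h)) hnadj hne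
  · exact dist_eq_two' (glAdj_xx.mpr (Or.inr h)) (glAdj_xy.mpr rfl) hnadj hne

lemma dist2_yx {i j : Fin l} (h : (i:ℕ)+1 = (j:ℕ) ∨ (j:ℕ)+1 = (i:ℕ)) :
    (GLGraph l).dist (.y i) (.x j) = 2 := by
  have hne : (GLVert.y i : GLVert l) ≠ .x j := fun he => by injection he
  have hnadj : ¬ (GLGraph l).Adj (.y i) (.x j) := fun ha => by
    have := glAdj_yx.mp ha
    subst this
    omega
  rcases h with h | h
  · exact dist_eq_two' (glAdj_yx.mpr rfl) (glAdj_xx.mpr (Or.inl h)) hnadj hne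
  · exact dist_eq_two' (glAdj_yy.mpr (Or.inr h)) (glAdj_yx.mpr rfl) hnadj hne

lemma dist2_ux (hl : 0 < l) {i : Fin l} (h : (i:ℕ) = 1) :
    (GLGraph l).dist .u (.x i) = 2 :=
  dist_eq_two' (a := GLVert.u) (b := GLVert.x ⟨0, hl⟩) (glAdj_ux.mpr rfl)
    (glAdj_xx.mpr (Or.inl (by simpa using h.symm)))
    (fun ha => by have := glAdj_ux.mp ha; omega) (fun he => by injection he)

lemma dist2_uy (hl : 0 < l) {i : Fin l} (h : (i:ℕ) = 1) :
    (GLGraph l).dist .u (.y i) = 2 :=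
  dist_eq_two' (a := GLVert.u) (b := GLVert.y ⟨0, hl⟩) (glAdj_uy.mpr rfl)
    (glAdj_yy.mpr (Or.inl (by simpa using h.symm)))
    (fun ha => by have := glAdj_uy.mp ha; omega) (fun he => by injection he)

lemma dist2_vx (hl : 3 ≤ l) {i : Fin l} (h : (i:ℕ) = l - 2) :
    (GLGraph l).dist .v (.x i) = 2 := by
  rw [SimpleGraph.dist_comm]
  exact dist_eq_two' (b := GLVert.x ⟨l-1, by omega⟩)
    (glAdj_xx.mpr (Or.inl (by simp [h]; omega)))
    (glAdj_xv.mpr (by simp))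
    (fun ha => by have := glAdj_xv.mp ha; omega) (fun he => by injection he)

lemma dist2_vy (hl : 3 ≤ l) {i : Fin l} (h : (i:ℕ) = l - 2) :
    (GLGraph l).dist .v (.y i) = 2 := by
  rw [SimpleGraph.dist_comm]
  exact dist_eq_two' (b := GLVert.y ⟨l-1, by omega⟩)
    (glAdj_yy.mpr (Or.inl (by simp [h]; omega)))
    (glAdj_yv.mpr (by simp))
    (fun ha => by have := glAdj_yv.mp ha; omega) (fun he => by injection he)

end Auxiliary

theorem stmt8 (l : ℕ) (hl : 3 ≤ l) (f : GLVert l → ℕ)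
    (hf : IsKL21Labeling (GLGraph l) 5 f)
    (T : Set (GLVert l))
    (hT : IsCompOf (GLGraph l) (H1Set l f) T ∨ IsCompOf (GLGraph l) (H2Set l f) T)
    (hpath : IsPathSet (GLGraph l) T) :
    (∀ i j : Fin l, (i : ℕ) + 1 = (j : ℕ) →
        GLVert.x i ∈ T → GLVert.y i ∈ T → GLVert.y j ∈ T →
        IsPathEnd (GLGraph l) T (GLVert.x i) → (i : ℕ) = 1) ∧
    (∀ i j : Fin l, (i : ℕ) + 1 = (j : ℕ) →
        GLVert.y i ∈ T → GLVert.x i ∈ T → GLVert.x j ∈ T →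
        IsPathEnd (GLGraph l) T (GLVert.y i) → (i : ℕ) = 1) ∧
    (∀ i j : Fin l, (j : ℕ) + 1 = (i : ℕ) →
        GLVert.x i ∈ T → GLVert.y i ∈ T → GLVert.y j ∈ T →
        IsPathEnd (GLGraph l) T (GLVert.x i) → (i : ℕ) = l - 2) ∧
    (∀ i j : Fin l, (j : ℕ) + 1 = (i : ℕ) →
        GLVert.y i ∈ T → GLVert.x i ∈ T → GLVert.x j ∈ T →
        IsPathEnd (GLGraph l) T (GLVert.y i) → (i : ℕ) = l - 2) := by
  obtain ⟨S, hcomp, hpar⟩ : ∃ S : Set (GLVert l), IsCompOf (GLGraph l) S T ∧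
      ((∀ w, w ∈ S ↔ (f w = 0 ∨ f w = 2 ∨ f w = 4)) ∨
       (∀ w, w ∈ S ↔ (f w = 1 ∨ f w = 3 ∨ f w = 5))) := by
    rcases hT with hc | hc
    · exact ⟨_, hc, Or.inl fun w => Iff.rfl⟩
    · exact ⟨_, hc, Or.inr fun w => Iff.rfl⟩
  refine ⟨?_, ?_, ?_, ?_⟩
  · -- part 1 : x end, forward
    intro i j hij hxi hyi hyj hend
    by_contra hne
    have hil : (i:ℕ) < l := i.isLt
    have hjl : (j:ℕ) < l := j.isLt
    rcases Nat.lt_or_ge (i:ℕ) 1 with hlt | hge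
    · have h0 : (i:ℕ) = 0 := by omega
      exact core_bd hf hcomp hpar (glAdj_ux.mpr h0) (glAdj_uy.mpr h0)
        (glAdj_xx.mpr (Or.inl hij)) (glAdj_yy.mpr (Or.inl hij))
        (glAdj_xy.mpr rfl) (glAdj_xy.mpr rfl)
        (dist2_ux (by omega) (by omega)) (dist2_xy (Or.inl hij))
        (fun he => by injection he) (fun he => by injection he)
        hxi hyi hyj hend
    · have h2 : 2 ≤ (i:ℕ) := by omega
      obtain ⟨i1, vi1⟩ : ∃ k : Fin l, (k:ℕ) = (i:ℕ) - 1 := ⟨⟨(i:ℕ)-1, by omega⟩, rfl⟩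
      obtain ⟨i2, vi2⟩ : ∃ k : Fin l, (k:ℕ) = (i:ℕ) - 2 := ⟨⟨(i:ℕ)-2, by omega⟩, rfl⟩
      refine core_mid (a2 := .x i2) (a1 := .x i1) (a0 := .x i) (a3 := .x j)
        (b2 := .y i2) (b1 := .y i1) (b0 := .y i) (b3 := .y j) hf hcomp hpar
        ?_ ?_ ?_ ?_ ?_ ?_ ?_ ?_ ?_ ?_ ?_ ?_ ?_ ?_ ?_ ?_ ?_ ?_ hxi hyi hyj hend
      · exact glAdj_xx.mpr (Or.inl (by omega))
      · exact glAdj_xx.mpr (Or.inl (by omega))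
      · exact glAdj_xx.mpr (Or.inl (by omega))
      · exact glAdj_yy.mpr (Or.inl (by omega))
      · exact glAdj_yy.mpr (Or.inl (by omega))
      · exact glAdj_yy.mpr (Or.inl (by omega))
      · exact glAdj_xy.mpr rfl
      · exact glAdj_xy.mpr rfl
      · exact glAdj_xy.mpr rfl
      · exact glAdj_xy.mpr rfl
      · exact dist2_xx (k := i) (Or.inl (by omega)) (Or.inl (by omega))
          (by omega) (by omega) (by omega)
      · exact dist2_xy (Or.inl (by omega))
      · exact dist2_xy (Or.inr (by omega))
      · exact dist2_xx (k := i1) (Or.inl (by omega)) (Or.inl (by omega))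
          (by omega) (by omega) (by omega)
      · exact dist2_xy (Or.inl (by omega))
      · exact dist2_yx (Or.inl (by omega))
      · exact fun he => by injection he
      · exact fun he => by injection he
  · -- part 2 : y end, forward
    intro i j hij hyi hxi hxj hend
    by_contra hne
    have hil : (i:ℕ) < l := i.isLt
    have hjl : (j:ℕ) < l := j.isLt
    rcases Nat.lt_or_ge (i:ℕ) 1 with hlt | hge
    · have h0 : (i:ℕ) = 0 := by omega
      exact core_bd hf hcomp hpar (glAdj_uy.mpr h0) (glAdj_ux.mpr h0)
        (glAdj_yy.mpr (Or.inl hij)) (glAdj_xx.mpr (Or.inl hij))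
        (glAdj_yx.mpr rfl) (glAdj_yx.mpr rfl)
        (dist2_uy (by omega) (by omega)) (dist2_yx (Or.inl hij))
        (fun he => by injection he) (fun he => by injection he)
        hyi hxi hxj hend
    · have h2 : 2 ≤ (i:ℕ) := by omega
      obtain ⟨i1, vi1⟩ : ∃ k : Fin l, (k:ℕ) = (i:ℕ) - 1 := ⟨⟨(i:ℕ)-1, by omega⟩, rfl⟩
      obtain ⟨i2, vi2⟩ : ∃ k : Fin l, (k:ℕ) = (i:ℕ) - 2 := ⟨⟨(i:ℕ)-2, by omega⟩, rfl⟩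
      refine core_mid (a2 := .y i2) (a1 := .y i1) (a0 := .y i) (a3 := .y j)
        (b2 := .x i2) (b1 := .x i1) (b0 := .x i) (b3 := .x j) hf hcomp hpar
        ?_ ?_ ?_ ?_ ?_ ?_ ?_ ?_ ?_ ?_ ?_ ?_ ?_ ?_ ?_ ?_ ?_ ?_ hyi hxi hxj hend
      · exact glAdj_yy.mpr (Or.inl (by omega))
      · exact glAdj_yy.mpr (Or.inl (by omega))
      · exact glAdj_yy.mpr (Or.inl (by omega))
      · exact glAdj_xx.mpr (Or.inl (by omega))
      · exact glAdj_xx.mpr (Or.inl (by omega))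
      · exact glAdj_xx.mpr (Or.inl (by omega))
      · exact glAdj_yx.mpr rfl
      · exact glAdj_yx.mpr rfl
      · exact glAdj_yx.mpr rfl
      · exact glAdj_yx.mpr rfl
      · exact dist2_yy (k := i) (Or.inl (by omega)) (Or.inl (by omega))
          (by omega) (by omega) (by omega)
      · exact dist2_yx (Or.inl (by omega))
      · exact dist2_yx (Or.inr (by omega))
      · exact dist2_yy (k := i1) (Or.inl (by omega)) (Or.inl (by omega))
          (by omega) (by omega) (by omega)
      · exact dist2_yx (Or.inl (by omega))
      · exact dist2_xy (Or.inl (by omega))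
      · exact fun he => by injection he
      · exact fun he => by injection he
  · -- part 3 : x end, backward
    intro i j hij hxi hyi hyj hend
    by_contra hne
    have hil : (i:ℕ) < l := i.isLt
    have hjl : (j:ℕ) < l := j.isLt
    rcases eq_or_ne (i:ℕ) (l-1) with h0 | hltl
    · exact core_bd hf hcomp hpar ((glAdj_xv.mpr h0).symm) ((glAdj_yv.mpr h0).symm)
        (glAdj_xx.mpr (Or.inr hij)) (glAdj_yy.mpr (Or.inr hij))
        (glAdj_xy.mpr rfl) (glAdj_xy.mpr rfl)
        (dist2_vx hl (by omega)) (dist2_xy (Or.inr hij))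
        (fun he => by injection he) (fun he => by injection he)
        hxi hyi hyj hend
    · have h3 : (i:ℕ) + 2 ≤ l - 1 := by omega
      obtain ⟨i1, vi1⟩ : ∃ k : Fin l, (k:ℕ) = (i:ℕ) + 1 := ⟨⟨(i:ℕ)+1, by omega⟩, rfl⟩
      obtain ⟨i2, vi2⟩ : ∃ k : Fin l, (k:ℕ) = (i:ℕ) + 2 := ⟨⟨(i:ℕ)+2, by omega⟩, rfl⟩
      refine core_mid (a2 := .x i2) (a1 := .x i1) (a0 := .x i) (a3 := .x j)
        (b2 := .y i2) (b1 := .y i1) (b0 := .y i) (b3 := .y j) hf hcomp hpar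
        ?_ ?_ ?_ ?_ ?_ ?_ ?_ ?_ ?_ ?_ ?_ ?_ ?_ ?_ ?_ ?_ ?_ ?_ hxi hyi hyj hend
      · exact glAdj_xx.mpr (Or.inr (by omega))
      · exact glAdj_xx.mpr (Or.inr (by omega))
      · exact glAdj_xx.mpr (Or.inr (by omega))
      · exact glAdj_yy.mpr (Or.inr (by omega))
      · exact glAdj_yy.mpr (Or.inr (by omega))
      · exact glAdj_yy.mpr (Or.inr (by omega))
      · exact glAdj_xy.mpr rfl
      · exact glAdj_xy.mpr rfl
      · exact glAdj_xy.mpr rfl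
      · exact glAdj_xy.mpr rfl
      · exact dist2_xx (k := i) (Or.inr (by omega)) (Or.inr (by omega))
          (by omega) (by omega) (by omega)
      · exact dist2_xy (Or.inr (by omega))
      · exact dist2_xy (Or.inl (by omega))
      · exact dist2_xx (k := i1) (Or.inr (by omega)) (Or.inr (by omega))
          (by omega) (by omega) (by omega)
      · exact dist2_xy (Or.inr (by omega))
      · exact dist2_yx (Or.inr (by omega))
      · exact fun he => by injection he
      · exact fun he => by injection he
  · -- part 4 : y end, backward
    intro i j hij hyi hxi hxj hend
    by_contra hne
    have hil : (i:ℕ) < l := i.isLt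
    have hjl : (j:ℕ) < l := j.isLt
    rcases eq_or_ne (i:ℕ) (l-1) with h0 | hltl
    · exact core_bd hf hcomp hpar ((glAdj_yv.mpr h0).symm) ((glAdj_xv.mpr h0).symm)
        (glAdj_yy.mpr (Or.inr hij)) (glAdj_xx.mpr (Or.inr hij))
        (glAdj_yx.mpr rfl) (glAdj_yx.mpr rfl)
        (dist2_vy hl (by omega)) (dist2_yx (Or.inr hij))
        (fun he => by injection he) (fun he => by injection he)
        hyi hxi hxj hend
    · have h3 : (i:ℕ) + 2 ≤ l - 1 := by omega
      obtain ⟨i1, vi1⟩ : ∃ k : Fin l, (k:ℕ) = (i:ℕ) + 1 := ⟨⟨(i:ℕ)+1, by omega⟩, rfl⟩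
      obtain ⟨i2, vi2⟩ : ∃ k : Fin l, (k:ℕ) = (i:ℕ) + 2 := ⟨⟨(i:ℕ)+2, by omega⟩, rfl⟩
      refine core_mid (a2 := .y i2) (a1 := .y i1) (a0 := .y i) (a3 := .y j)
        (b2 := .x i2) (b1 := .x i1) (b0 := .x i) (b3 := .x j) hf hcomp hpar
        ?_ ?_ ?_ ?_ ?_ ?_ ?_ ?_ ?_ ?_ ?_ ?_ ?_ ?_ ?_ ?_ ?_ ?_ hyi hxi hxj hend
      · exact glAdj_yy.mpr (Or.inr (by omega))
      · exact glAdj_yy.mpr (Or.inr (by omega))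
      · exact glAdj_yy.mpr (Or.inr (by omega))
      · exact glAdj_xx.mpr (Or.inr (by omega))
      · exact glAdj_xx.mpr (Or.inr (by omega))
      · exact glAdj_xx.mpr (Or.inr (by omega))
      · exact glAdj_yx.mpr rfl
      · exact glAdj_yx.mpr rfl
      · exact glAdj_yx.mpr rfl
      · exact glAdj_yx.mpr rfl
      · exact dist2_yy (k := i) (Or.inr (by omega)) (Or.inr (by omega))
          (by omega) (by omega) (by omega)
      · exact dist2_yx (Or.inr (by omega))
      · exact dist2_yx (Or.inl (by omega))
      · exact dist2_yy (k := i1) (Or.inr (by omega)) (Or.inr (by omega))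
          (by omega) (by omega) (by omega)
      · exact dist2_yx (Or.inr (by omega))
      · exact dist2_xy (Or.inr (by omega))
      · exact fun he => by injection he
      · exact fun he => by injection he
end

section
/- Let W = w_1 w_2 w_3 w_4 be a path and let (a, b) ∈ {(6,0), (0,6), (2,6), (6,2), (0,4), (4,0), (4,2), (2,4)}. Then there exists a path-extendable 6-L(2,1)-labeling f of W such that: (i) f(w_1) = b and f(w_4) = a; (ii) f(w_2), f(w_3) ∈ {1, 3, 5}; and (iii) for every H ∈ 𝓗(W), f can be extended to a 6-L(2,1)-labeling of H in which every vertex of V(H) \ V(W) receives a label from {0, 1, ..., 6} \ {a, b, f(w_2), f(w_3)}. -/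
/-- The path graph on `Fin n`, with edges between consecutive indices. -/
def PathGraph (n : ℕ) : SimpleGraph (Fin n) :=
  SimpleGraph.fromRel (fun p q => (p : ℕ) + 1 = (q : ℕ))

/-- The vertex type of members of 𝓗(P) for P = u u_1 ... u_l v :
`Sum.inl 0` is u, `Sum.inl i` is u_i for 1 ≤ i ≤ l, `Sum.inl (l+1)` is v,
and `Sum.inr (i, false)`, `Sum.inr (i, true)` are the (at most two) new internal
vertices of a path attached at the pair (u_i, u_{i+1}). -/
abbrev PVert (l : ℕ) := Fin (l + 2) ⊕ (ℕ × Bool)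

/-- An attachment specification `D` : at position `i`, `none` means no attached path,
`some false` means a path of length 2 (one new vertex), `some true` means a path of
length 3 (two new vertices). Valid specs attach only at pairs (u_i, u_{i+1}) with
1 ≤ i ≤ l-1, and no two attachment positions are consecutive (i.e. gaps ≥ 2). -/
def ValidD (l : ℕ) (D : ℕ → Option Bool) : Prop :=
  (∀ i, (D i).isSome → 1 ≤ i ∧ i + 1 ≤ l) ∧
  (∀ i, ¬ ((D i).isSome ∧ (D (i + 1)).isSome))

/-- The edge relation (up to symmetrization) of the member of 𝓗(P) described by `D`. -/
def attachRel (l : ℕ) (D : ℕ → Option Bool) : PVert l → PVert l → Prop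
  | Sum.inl p, Sum.inl q => (p : ℕ) + 1 = (q : ℕ)
  | Sum.inl p, Sum.inr (i, k) =>
      ((p : ℕ) = i ∧ k = false) ∨
      ((p : ℕ) = i + 1 ∧ ((D i = some false ∧ k = false) ∨ (D i = some true ∧ k = true)))
  | Sum.inr (i, k), Sum.inr (j, m) => i = j ∧ D i = some true ∧ k = false ∧ m = true
  | _, _ => False

def AttachG (l : ℕ) (D : ℕ → Option Bool) : SimpleGraph (PVert l) :=
  SimpleGraph.fromRel (attachRel l D)

/-- The vertices actually present in the member of 𝓗(P) described by `D`. -/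
def Active {l : ℕ} (D : ℕ → Option Bool) : PVert l → Prop
  | Sum.inl _ => True
  | Sum.inr (i, k) => (D i).isSome ∧ (k = false ∨ D i = some true)

/-- `f` extends to a 6-L(2,1)-labeling of the member of 𝓗(P) described by `D`. -/
def ExtendsToAttach (l : ℕ) (D : ℕ → Option Bool) (f : Fin (l + 2) → ℕ) : Prop :=
  ∃ g : ↥{w : PVert l | Active D w} → ℕ,
    IsKL21Labeling ((AttachG l D).induce {w : PVert l | Active D w}) 6 g ∧
    ∀ p : Fin (l + 2), g ⟨Sum.inl p, trivial⟩ = f p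

/-- A path-extendable 6-L(2,1)-labeling of the path P = u u_1 ... u_l v :
a 6-L(2,1)-labeling of P that extends to a 6-L(2,1)-labeling of every H ∈ 𝓗(P). -/
def PathExtendable (l : ℕ) (f : Fin (l + 2) → ℕ) : Prop :=
  IsKL21Labeling (PathGraph (l + 2)) 6 f ∧
  ∀ D : ℕ → Option Bool, ValidD l D → ExtendsToAttach l D f


lemma pathL (f : Fin 4 → ℕ)
    (h01 : 2 ≤ ((f 0 : ℤ) - f 1).natAbs) (h12 : 2 ≤ ((f 1 : ℤ) - f 2).natAbs)
    (h23 : 2 ≤ ((f 2 : ℤ) - f 3).natAbs) (hinj : Function.Injective f)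
    (hle : ∀ p, f p ≤ 6) :
    IsKL21Labeling (PathGraph 4) 6 f := by
  refine ⟨⟨?_, ?_⟩, hle⟩
  · intro p q hpq
    rw [PathGraph, SimpleGraph.fromRel_adj] at hpq
    obtain ⟨hne, h | h⟩ := hpq <;> fin_cases p <;> fin_cases q <;> simp_all <;> omega
  · intro p q h hpq
    have hne : p = q := hinj hpq
    subst hne
    simp [SimpleGraph.dist_self] at h

def labG (f : Fin 4 → ℕ) (c d : ℕ) : PVert 2 → ℕ
  | Sum.inl p => f p
  | Sum.inr (_, false) => c
  | Sum.inr (_, true) => d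

lemma fin4cases : ∀ p q : Fin 4, (p : ℕ) + 1 = (q : ℕ) →
    (p = 0 ∧ q = 1) ∨ (p = 1 ∧ q = 2) ∨ (p = 2 ∧ q = 3) := by decide

lemma masterD (D : ℕ → Option Bool) (hD : ValidD 2 D) (f : Fin 4 → ℕ) (c d : ℕ)
    (h01 : 2 ≤ ((f 0 : ℤ) - f 1).natAbs) (h12 : 2 ≤ ((f 1 : ℤ) - f 2).natAbs)
    (h23 : 2 ≤ ((f 2 : ℤ) - f 3).natAbs) (hinj : Function.Injective f)
    (hle : ∀ p, f p ≤ 6) (hc6 : c ≤ 6) (hd6 : d ≤ 6)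
    (hcA : (D 1).isSome → 2 ≤ ((c : ℤ) - f 1).natAbs ∧ c ≠ f 0 ∧ c ≠ f 2 ∧ c ≠ f 3)
    (hcB : D 1 = some false → 2 ≤ ((c : ℤ) - f 2).natAbs)
    (hdA : D 1 = some true → 2 ≤ ((d : ℤ) - f 2).natAbs ∧ 2 ≤ ((c : ℤ) - d).natAbs ∧
      d ≠ f 0 ∧ d ≠ f 1 ∧ d ≠ f 3) :
    ∃ g : ↥{w : PVert 2 | Active D w} → ℕ,
      IsKL21Labeling ((AttachG 2 D).induce {w : PVert 2 | Active D w}) 6 g ∧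
      (∀ p : Fin 4, g ⟨Sum.inl p, trivial⟩ = f p) ∧
      (∀ (i : ℕ) (bb : Bool) (h : Sum.inr (i, bb) ∈ {w : PVert 2 | Active D w}),
        g ⟨Sum.inr (i, bb), h⟩ ≠ f 0 ∧ g ⟨Sum.inr (i, bb), h⟩ ≠ f 1 ∧
        g ⟨Sum.inr (i, bb), h⟩ ≠ f 2 ∧ g ⟨Sum.inr (i, bb), h⟩ ≠ f 3) := by
  classical
  have hidx : ∀ i (k : Bool), Active D (Sum.inr (i, k) : PVert 2) → i = 1 := by
    rintro i k ⟨hs, -⟩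
    have := hD.1 i hs
    omega
  have htrue : ∀ i, Active D (Sum.inr (i, true) : PVert 2) → D 1 = some true := by
    rintro i ⟨hs, h | h⟩
    · simp at h
    · have := hD.1 i hs; have : i = 1 := by omega
      subst this; exact h
  have hfneq : ∀ p q : Fin 4, p ≠ q → f p ≠ f q := fun p q h hf => h (hinj hf)
  have hcf : ∀ p : Fin 4, (D 1).isSome → c ≠ f p := by
    intro p hs
    obtain ⟨hg, h0, h2, h3⟩ := hcA hs
    fin_cases p
    · exact h0
    · show c ≠ f 1; omega
    · exact h2
    · exact h3
  have hdf : ∀ p : Fin 4, D 1 = some true → d ≠ f p := by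
    intro p ht
    obtain ⟨hg, -, h0, h1, h3⟩ := hdA ht
    fin_cases p
    · exact h0
    · exact h1
    · show d ≠ f 2; omega
    · exact h3
  set S : Set (PVert 2) := {w : PVert 2 | Active D w} with hS
  have hGne : ∀ u v : PVert 2, u ∈ S → v ∈ S → u ≠ v →
      labG f c d u ≠ labG f c d v := by
    rintro (p | ⟨i, k⟩) (q | ⟨j, m⟩) hu hv hne
    · exact hfneq p q (fun h => hne (by rw [h]))
    · have hj := hidx j m hv
      subst hj
      cases m
      · exact fun h => hcf p hv.1 h.symm
      · exact fun h => hdf p (htrue 1 hv) h.symm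
    · have hi := hidx i k hu
      subst hi
      cases k
      · exact hcf q hu.1
      · exact hdf q (htrue 1 hu)
    · have hi := hidx i k hu
      have hj := hidx j m hv
      subst hi; subst hj
      have hkm : k ≠ m := fun h => hne (by rw [h])
      cases k <;> cases m
      · exact absurd rfl hkm
      · have := (hdA (htrue 1 hv)).2.1
        show c ≠ d; omega
      · have := (hdA (htrue 1 hu)).2.1
        show d ≠ c; omega
      · exact absurd rfl hkm
  have key : ∀ u v : PVert 2, u ∈ S → v ∈ S → attachRel 2 D u v →
      2 ≤ ((labG f c d u : ℤ) - labG f c d v).natAbs := by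
    rintro (p | ⟨i, k⟩) (q | ⟨j, m⟩) hu hv hr
    · change (p : ℕ) + 1 = (q : ℕ) at hr
      rcases fin4cases p q hr with ⟨rfl, rfl⟩ | ⟨rfl, rfl⟩ | ⟨rfl, rfl⟩
      · exact h01
      · exact h12
      · exact h23
    · have hj := hidx j m hv
      subst hj
      have hs : (D 1).isSome := hv.1
      rcases hr with ⟨hp, rfl⟩ | ⟨hp, ⟨hDf, rfl⟩ | ⟨hDt, rfl⟩⟩
      · have hp1 : p = 1 := Fin.ext (by simpa using hp)
        subst hp1
        have := (hcA hs).1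
        show 2 ≤ ((f 1 : ℤ) - c).natAbs
        omega
      · have hp2 : p = 2 := Fin.ext (by simpa using hp)
        subst hp2
        have := hcB hDf
        show 2 ≤ ((f 2 : ℤ) - c).natAbs
        omega
      · have hp2 : p = 2 := Fin.ext (by simpa using hp)
        subst hp2
        have := (hdA hDt).1
        show 2 ≤ ((f 2 : ℤ) - d).natAbs
        omega
    · exact hr.elim
    · obtain ⟨rfl, hDt, rfl, rfl⟩ := hr
      have hi := hidx i false hu
      subst hi
      have := (hdA hDt).2.1
      show 2 ≤ ((c : ℤ) - d).natAbs
      omega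
  refine ⟨fun w => labG f c d w.val, ⟨⟨?_, ?_⟩, ?_⟩, fun p => rfl, ?_⟩
  · rintro ⟨u, hu⟩ ⟨v, hv⟩ hadj
    have hadj' : (AttachG 2 D).Adj u v := hadj
    rw [AttachG, SimpleGraph.fromRel_adj] at hadj'
    show 2 ≤ ((labG f c d u : ℤ) - labG f c d v).natAbs
    rcases hadj'.2 with h | h
    · exact key u v hu hv h
    · have := key v u hv hu h
      omega
  · rintro ⟨u, hu⟩ ⟨v, hv⟩ hdist hguv
    refine hGne u v hu hv ?_ hguv
    rintro rfl
    simp [SimpleGraph.dist_self] at hdist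
  · rintro ⟨(p | ⟨i, k⟩), hw⟩
    · exact hle p
    · cases k
      · exact hc6
      · exact hd6
  · intro i bb h
    have hi := hidx i bb h
    subst hi
    cases bb
    · exact ⟨hcf 0 h.1, hcf 1 h.1, hcf 2 h.1, hcf 3 h.1⟩
    · have ht := htrue 1 h
      exact ⟨hdf 0 ht, hdf 1 ht, hdf 2 ht, hdf 3 ht⟩

def HypC (f : Fin 4 → ℕ) (cF cT dT : ℕ) : Prop :=
  Function.Injective f ∧ (∀ p, f p ≤ 6) ∧
  2 ≤ ((f 0 : ℤ) - f 1).natAbs ∧ 2 ≤ ((f 1 : ℤ) - f 2).natAbs ∧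
  2 ≤ ((f 2 : ℤ) - f 3).natAbs ∧
  (f 1 = 1 ∨ f 1 = 3 ∨ f 1 = 5) ∧ (f 2 = 1 ∨ f 2 = 3 ∨ f 2 = 5) ∧
  cF ≤ 6 ∧ cT ≤ 6 ∧ dT ≤ 6 ∧
  2 ≤ ((cF : ℤ) - f 1).natAbs ∧ 2 ≤ ((cF : ℤ) - f 2).natAbs ∧ cF ≠ f 0 ∧ cF ≠ f 3 ∧
  2 ≤ ((cT : ℤ) - f 1).natAbs ∧ cT ≠ f 0 ∧ cT ≠ f 2 ∧ cT ≠ f 3 ∧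
  2 ≤ ((dT : ℤ) - f 2).natAbs ∧ 2 ≤ ((cT : ℤ) - dT).natAbs ∧
  dT ≠ f 0 ∧ dT ≠ f 1 ∧ dT ≠ f 3

instance (f : Fin 4 → ℕ) (cF cT dT : ℕ) : Decidable (HypC f cF cT dT) := by
  unfold HypC; infer_instance

lemma caseLemma (a b : ℕ) (f : Fin 4 → ℕ) (cF cT dT : ℕ)
    (hb : f 0 = b) (ha : f 3 = a) (hH : HypC f cF cT dT) :
    ∃ f : Fin 4 → ℕ,
      PathExtendable 2 f ∧
      f 0 = b ∧ f 3 = a ∧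
      (f 1 = 1 ∨ f 1 = 3 ∨ f 1 = 5) ∧ (f 2 = 1 ∨ f 2 = 3 ∨ f 2 = 5) ∧
      ∀ D : ℕ → Option Bool, ValidD 2 D →
        ∃ g : ↥{w : PVert 2 | Active D w} → ℕ,
          IsKL21Labeling ((AttachG 2 D).induce {w : PVert 2 | Active D w}) 6 g ∧
          (∀ p : Fin 4, g ⟨Sum.inl p, trivial⟩ = f p) ∧
          (∀ (i : ℕ) (bb : Bool) (h : Sum.inr (i, bb) ∈ {w : PVert 2 | Active D w}),
            g ⟨Sum.inr (i, bb), h⟩ ≠ a ∧ g ⟨Sum.inr (i, bb), h⟩ ≠ b ∧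
            g ⟨Sum.inr (i, bb), h⟩ ≠ f 1 ∧ g ⟨Sum.inr (i, bb), h⟩ ≠ f 2) := by
  obtain ⟨hinj, hle, h01, h12, h23, hf1, hf2, hcF6, hcT6, hdT6, hcF1, hcF2, hcF0, hcF3,
    hcT1, hcT0, hcT2n, hcT3, hdT2, hcTdT, hdT0, hdT1, hdT3⟩ := hH
  subst hb; subst ha
  have build : ∀ D, ValidD 2 D →
      ∃ g : ↥{w : PVert 2 | Active D w} → ℕ,
        IsKL21Labeling ((AttachG 2 D).induce {w : PVert 2 | Active D w}) 6 g ∧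
        (∀ p : Fin 4, g ⟨Sum.inl p, trivial⟩ = f p) ∧
        (∀ (i : ℕ) (bb : Bool) (h : Sum.inr (i, bb) ∈ {w : PVert 2 | Active D w}),
          g ⟨Sum.inr (i, bb), h⟩ ≠ f 0 ∧ g ⟨Sum.inr (i, bb), h⟩ ≠ f 1 ∧
          g ⟨Sum.inr (i, bb), h⟩ ≠ f 2 ∧ g ⟨Sum.inr (i, bb), h⟩ ≠ f 3) := by
    intro D hD
    rcases hh : D 1 with _ | bb
    · exact masterD D hD f 0 0 h01 h12 h23 hinj hle (by omega) (by omega)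
        (by simp [hh]) (by simp [hh]) (by simp [hh])
    · cases bb
      · refine masterD D hD f cF 0 h01 h12 h23 hinj hle hcF6 (by omega)
          (fun _ => ⟨hcF1, hcF0, by omega, hcF3⟩) (fun _ => hcF2) (fun h => ?_)
        rw [hh] at h; simp at h
      · refine masterD D hD f cT dT h01 h12 h23 hinj hle hcT6 hdT6
          (fun _ => ⟨hcT1, hcT0, hcT2n, hcT3⟩) (fun h => ?_)
          (fun _ => ⟨hdT2, hcTdT, hdT0, hdT1, hdT3⟩)
        rw [hh] at h; simp at h
  refine ⟨f, ⟨pathL f h01 h12 h23 hinj hle, fun D hD => ?_⟩, rfl, rfl, hf1, hf2,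
    fun D hD => ?_⟩
  · obtain ⟨g, hg1, hg2, -⟩ := build D hD
    exact ⟨g, hg1, hg2⟩
  · obtain ⟨g, hg1, hg2, hg3⟩ := build D hD
    refine ⟨g, hg1, hg2, fun i bb h => ?_⟩
    obtain ⟨x0, x1, x2, x3⟩ := hg3 i bb h
    exact ⟨x3, x0, x1, x2⟩

theorem stmt13 (a b : ℕ)
    (hab : (a, b) ∈ ({(6, 0), (0, 6), (2, 6), (6, 2), (0, 4), (4, 0), (4, 2), (2, 4)} :
      Set (ℕ × ℕ))) :
    ∃ f : Fin 4 → ℕ,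
      PathExtendable 2 f ∧
      f 0 = b ∧ f 3 = a ∧
      (f 1 = 1 ∨ f 1 = 3 ∨ f 1 = 5) ∧ (f 2 = 1 ∨ f 2 = 3 ∨ f 2 = 5) ∧
      ∀ D : ℕ → Option Bool, ValidD 2 D →
        ∃ g : ↥{w : PVert 2 | Active D w} → ℕ,
          IsKL21Labeling ((AttachG 2 D).induce {w : PVert 2 | Active D w}) 6 g ∧
          (∀ p : Fin 4, g ⟨Sum.inl p, trivial⟩ = f p) ∧
          (∀ (i : ℕ) (bb : Bool) (h : Sum.inr (i, bb) ∈ {w : PVert 2 | Active D w}),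
            g ⟨Sum.inr (i, bb), h⟩ ≠ a ∧ g ⟨Sum.inr (i, bb), h⟩ ≠ b ∧
            g ⟨Sum.inr (i, bb), h⟩ ≠ f 1 ∧ g ⟨Sum.inr (i, bb), h⟩ ≠ f 2) := by

  simp only [Set.mem_insert_iff, Set.mem_singleton_iff, Prod.mk.injEq] at hab
  obtain ⟨rfl, rfl⟩ | ⟨rfl, rfl⟩ | ⟨rfl, rfl⟩ | ⟨rfl, rfl⟩ | ⟨rfl, rfl⟩ | ⟨rfl, rfl⟩ |
    ⟨rfl, rfl⟩ | ⟨rfl, rfl⟩ := hab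
  · exact caseLemma _ _ ![0, 5, 1, 6] 3 2 4 (by decide) (by decide) (by decide)
  · exact caseLemma _ _ ![6, 1, 5, 0] 3 4 2 (by decide) (by decide) (by decide)
  · exact caseLemma _ _ ![6, 1, 5, 2] 3 3 0 (by decide) (by decide) (by decide)
  · exact caseLemma _ _ ![2, 5, 1, 6] 3 0 3 (by decide) (by decide) (by decide)
  · exact caseLemma _ _ ![4, 1, 5, 0] 3 6 2 (by decide) (by decide) (by decide)
  · exact caseLemma _ _ ![0, 5, 1, 4] 3 2 6 (by decide) (by decide) (by decide)
  · exact caseLemma _ _ ![2, 5, 1, 4] 3 0 6 (by decide) (by decide) (by decide)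
  · exact caseLemma _ _ ![4, 1, 5, 2] 3 6 0 (by decide) (by decide) (by decide)
end
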